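/- arXiv:1103.2986 — 13 statements merged into one kernel-verified Lean document; each statement's English description precedes it below -/
import Mathlib

section
/- If L is a unary free (prefix-free) regular language over a one-letter alphabet with quotient (state) complexity n ≥ 2, then its syntactic complexity equals n−1, i.e., its syntactic semigroup has exactly n−1 elements. -/
def leftQuotient {α : Type} (L : Language α) (w : List α) : Language α :=
  {x | w ++ x ∈ L}

/-- The quotient (state) complexity: the number of distinct left quotients of `L`. -/
noncomputable def quotientComplexity {α : Type} (L : Language α) : ℕ :=
  Nat.card (Set.range (leftQuotient L))

/-- The Myhill (syntactic) congruence, restricted to nonempty words. -/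
def synRel {α : Type} (L : Language α) (x y : {w : List α // w ≠ []}) : Prop :=
  ∀ u v : List α, u ++ x.1 ++ v ∈ L ↔ u ++ y.1 ++ v ∈ L

/-- The syntactic complexity: the cardinality of the syntactic semigroup `Σ⁺/≈_L`. -/
noncomputable def syntacticComplexity {α : Type} (L : Language α) : ℕ :=
  Nat.card (Quot (synRel L))

/-- No word of `L` is a proper prefix of another word of `L`. -/
def PrefixFree {α : Type} (L : Language α) : Prop :=
  ∀ x ∈ L, ∀ y ∈ L, x <+: y → x = y

lemma unit_list_eq (l : List Unit) : l = List.replicate l.length () := by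
  induction l with
  | nil => rfl
  | cons a t ih => cases a; rw [List.length_cons, List.replicate_succ, ← ih]

lemma unit_prefix (x y : List Unit) (h : x.length ≤ y.length) : x <+: y := by
  obtain ⟨m, rfl⟩ : ∃ m, x = List.replicate m () := ⟨x.length, unit_list_eq x⟩
  obtain ⟨p, rfl⟩ : ∃ p, y = List.replicate p () := ⟨y.length, unit_list_eq y⟩
  simp only [List.length_replicate] at h
  exact ⟨List.replicate (p - m) (), by rw [← List.replicate_add]; congr 1; omega⟩

/-- A unary (prefix-)free regular language with quotient complexity `n ≥ 2`
has syntactic complexity exactly `n - 1`. -/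
theorem statement0 (n : ℕ) (hn : 2 ≤ n) (L : Language Unit)
    (hfree : PrefixFree L) (hq : quotientComplexity L = n) :
    syntacticComplexity L = n - 1 := by
  -- L is nonempty
  have hne : ∃ w, w ∈ L := by
    by_contra h
    push_neg at h
    have hc : leftQuotient L = fun _ => (0 : Language Unit) := by
      funext w; ext x
      exact iff_of_false (h _) (Language.notMem_zero x)
    have h1 : quotientComplexity L = 1 := by
      unfold quotientComplexity
      rw [hc, Set.range_const]
      simp
    omega
  obtain ⟨w₀, hw₀⟩ := hne
  set k := w₀.length with hk
  -- L = words of length k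
  have hmem : ∀ x : List Unit, x ∈ L ↔ x.length = k := by
    intro x
    constructor
    · intro hx
      rcases le_or_gt x.length w₀.length with h | h
      · have hpre : x <+: w₀ := unit_prefix x w₀ h
        rw [hfree x hx w₀ hw₀ hpre]
      · have hpre : w₀ <+: x := unit_prefix w₀ x (le_of_lt h)
        have := hfree w₀ hw₀ x hx hpre
        rw [← this] at h
        omega
    · intro hx
      have : x = w₀ := by rw [unit_list_eq x, unit_list_eq w₀, hx]
      rwa [this]
  have hquot : ∀ w x : List Unit, x ∈ leftQuotient L w ↔ w.length + x.length = k := by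
    intro w x
    exact (hmem (w ++ x)).trans (by rw [List.length_append])
  have hquoteq : ∀ w w' : List Unit,
      leftQuotient L w = leftQuotient L w' ↔ min w.length (k+1) = min w'.length (k+1) := by
    intro w w'
    constructor
    · intro h
      have h1 := (hquot w' (List.replicate (k - w.length) ())).symm.trans
        ((Set.ext_iff.1 h (List.replicate (k - w.length) ())).symm.trans
          (hquot w (List.replicate (k - w.length) ())))
      have h2 := (hquot w' (List.replicate (k - w'.length) ())).symm.trans
        ((Set.ext_iff.1 h (List.replicate (k - w'.length) ())).symm.trans
          (hquot w (List.replicate (k - w'.length) ())))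
      simp only [List.length_replicate] at h1 h2
      omega
    · intro h
      ext x
      rw [hquot, hquot]
      omega
  -- quotient complexity = k + 2
  have hrange : Set.range (leftQuotient L)
      = Set.range (fun j : Fin (k+2) => leftQuotient L (List.replicate j ())) := by
    ext S
    simp only [Set.mem_range]
    constructor
    · rintro ⟨w, rfl⟩
      refine ⟨⟨min w.length (k+1), by omega⟩, ?_⟩
      rw [hquoteq]
      simp only [List.length_replicate]
      omega
    · rintro ⟨j, rfl⟩
      exact ⟨_, rfl⟩
  have hinj : Function.Injective (fun j : Fin (k+2) => leftQuotient L (List.replicate j ())) := by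
    intro i j h
    simp only at h
    rw [hquoteq] at h
    simp only [List.length_replicate] at h
    have hi := i.isLt
    have hj := j.isLt
    apply Fin.ext
    omega
  have hqc : quotientComplexity L = k + 2 := by
    unfold quotientComplexity
    rw [hrange, Nat.card_range_of_injective hinj]
    simp
  -- syntactic relation characterization
  have hsyn : ∀ x y : {w : List Unit // w ≠ []},
      synRel L x y ↔ min x.1.length (k+1) = min y.1.length (k+1) := by
    intro x y
    constructor
    · intro h
      have h1 := h [] (List.replicate (k - x.1.length) ())
      have h2 := h [] (List.replicate (k - y.1.length) ())
      simp only [hmem, List.length_append, List.length_replicate, List.length_nil] at h1 h2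
      omega
    · intro h u v
      simp only [hmem, List.length_append]
      omega
  -- syntactic complexity = k + 1
  have hsc : syntacticComplexity L = k + 1 := by
    unfold syntacticComplexity
    have e : Quot (synRel L) ≃ Fin (k+1) :=
      { toFun := Quot.lift (fun x => ⟨min x.1.length (k+1) - 1, by omega⟩) (by
          intro x y hxy
          have := (hsyn x y).1 hxy
          simp only [Fin.mk.injEq]
          omega)
        invFun := fun j => Quot.mk _ ⟨List.replicate (j+1) (), by simp⟩
        left_inv := by
          apply Quot.ind
          intro x
          apply Quot.sound
          rw [hsyn]
          have hx1 : 1 ≤ x.1.length := List.length_pos_iff.2 x.2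
          simp only [List.length_replicate]
          omega
        right_inv := by
          intro j
          have hj := j.isLt
          apply Fin.ext
          simp only [Quot.lift_mk, List.length_replicate]
          omega }
    rw [Nat.card_congr e]
    simp
  rw [hsc]
  omega
end

section
/- If L is a prefix-free regular language with quotient complexity n ≥ 2, then its syntactic complexity is at most n^{n−2}. -/
lemma leftQuotient_append {α : Type} (L : Language α) (u x : List α) :
    leftQuotient L (u ++ x) = leftQuotient (leftQuotient L u) x := by
  ext z
  show (u ++ x) ++ z ∈ L ↔ x ++ z ∈ {t | u ++ t ∈ L}
  rw [Set.mem_setOf_eq, List.append_assoc]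

lemma mem_leftQuotient {α : Type} (L : Language α) (w x : List α) :
    x ∈ leftQuotient L w ↔ w ++ x ∈ L := Iff.rfl

/-- A prefix-free regular language with quotient complexity `n ≥ 2`
has syntactic complexity at most `n ^ (n - 2)`. -/
theorem statement1 {α : Type} (n : ℕ) (hn : 2 ≤ n) (L : Language α)
    (hfree : PrefixFree L) (hq : quotientComplexity L = n) :
    syntacticComplexity L ≤ n ^ (n - 2) := by
  classical
  set Q : Set (Language α) := Set.range (leftQuotient L) with hQdef
  have hcard : Nat.card Q = n := hq
  have hfin : Finite Q := Nat.finite_of_card_ne_zero (by omega)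
  have hnontriv : ¬ Subsingleton Q := by
    intro h
    have h1 : Nat.card Q ≤ Nat.card Unit :=
      Nat.card_le_card_of_injective (fun _ => ())
        (fun p q _ => Subsingleton.elim p q)
    have h2 : Nat.card Unit = 1 := Nat.card_unique
    omega
  -- α is nonempty
  obtain ⟨a⟩ : Nonempty α := by
    by_contra h
    refine hnontriv ⟨?_⟩
    rintro ⟨_, u, rfl⟩ ⟨_, v, rfl⟩
    have hu : u = [] := by cases u with
      | nil => rfl
      | cons b _ => exact absurd ⟨b⟩ h
    have hv : v = [] := by cases v with
      | nil => rfl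
      | cons b _ => exact absurd ⟨b⟩ h
    simp [hu, hv]
  -- L is nonempty
  obtain ⟨w, hw⟩ : ∃ w, w ∈ L := by
    by_contra h
    push_neg at h
    refine hnontriv ⟨?_⟩
    rintro ⟨_, u, rfl⟩ ⟨_, v, rfl⟩
    apply Subtype.ext
    ext z
    simp [mem_leftQuotient, h]
  set E : Language α := (0 : Language α) with hEdef
  set A : Language α := (1 : Language α) with hAdef
  have hA : leftQuotient L w = A := by
    ext z
    rw [mem_leftQuotient, hAdef, Language.mem_one]
    constructor
    · intro hz
      have h1 := hfree w hw (w ++ z) hz ⟨z, rfl⟩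
      have h2 := congrArg List.length h1
      simp at h2
      simpa using h2
    · rintro rfl; simpa using hw
  have hE : leftQuotient L (w ++ [a]) = E := by
    ext z
    rw [mem_leftQuotient, hEdef]
    constructor
    · intro hz
      exfalso
      have h1 := hfree w hw ((w ++ [a]) ++ z) hz ⟨[a] ++ z, by simp⟩
      have h2 := congrArg List.length h1
      simp at h2
    · intro hz
      exact absurd hz (Language.notMem_zero z)
  have hAQ : A ∈ Q := ⟨w, hA⟩
  have hEQ : E ∈ Q := ⟨w ++ [a], hE⟩
  have hEA : E ≠ A := by
    intro h
    have h1 : ([] : List α) ∈ A := Language.nil_mem_one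
    rw [← h] at h1
    exact Language.notMem_zero _ h1
  have hclose : ∀ q ∈ Q, ∀ x : List α, leftQuotient q x ∈ Q := by
    rintro _ ⟨u, rfl⟩ x
    exact ⟨u ++ x, leftQuotient_append L u x⟩
  set S := {q : Q // q.1 ≠ E ∧ q.1 ≠ A} with hSdef
  have hSfin : Finite S := Subtype.finite
  set F : {w : List α // w ≠ []} → S → Q :=
    fun x q => ⟨leftQuotient q.1.1 x.1, hclose _ q.1.2 _⟩ with hFdef
  have hresp : ∀ x y, synRel L x y → F x = F y := by
    intro x y hxy
    funext q
    obtain ⟨⟨q', u, hu⟩, hq'⟩ := q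
    apply Subtype.ext
    simp only [hFdef]
    subst hu
    rw [← leftQuotient_append, ← leftQuotient_append]
    ext v
    simpa [mem_leftQuotient, List.append_assoc] using hxy u v
  have hGinj : Function.Injective (Quot.lift F hresp) := by
    intro p q
    induction p using Quot.ind with | _ x =>
    induction q using Quot.ind with | _ y =>
    intro h
    apply Quot.sound
    intro u v
    have hqQ : leftQuotient L u ∈ Q := ⟨u, rfl⟩
    by_cases hE' : leftQuotient L u = E
    · constructor <;> intro hm <;> exfalso
      · have hx : x.1 ++ v ∈ leftQuotient L u := by
          simpa [mem_leftQuotient, List.append_assoc] using hm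
        rw [hE'] at hx; exact Language.notMem_zero _ hx
      · have hy : y.1 ++ v ∈ leftQuotient L u := by
          simpa [mem_leftQuotient, List.append_assoc] using hm
        rw [hE'] at hy; exact Language.notMem_zero _ hy
    · by_cases hA' : leftQuotient L u = A
      · constructor <;> intro hm <;> exfalso
        · have hx : x.1 ++ v ∈ leftQuotient L u := by
            simpa [mem_leftQuotient, List.append_assoc] using hm
          rw [hA'] at hx
          rw [hAdef, Language.mem_one] at hx
          exact x.2 (List.append_eq_nil_iff.mp hx).1
        · have hy : y.1 ++ v ∈ leftQuotient L u := by
            simpa [mem_leftQuotient, List.append_assoc] using hm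
          rw [hA'] at hy
          rw [hAdef, Language.mem_one] at hy
          exact y.2 (List.append_eq_nil_iff.mp hy).1
      · have hcf := congrFun h (⟨⟨leftQuotient L u, hqQ⟩, hE', hA'⟩ : S)
        have heq : leftQuotient (leftQuotient L u) x.1 = leftQuotient (leftQuotient L u) y.1 :=
          Subtype.ext_iff.1 hcf
        have hx : (u ++ x.1 ++ v ∈ L) ↔ v ∈ leftQuotient (leftQuotient L u) x.1 := by
          rw [← leftQuotient_append]; exact Iff.rfl
        have hy : (u ++ y.1 ++ v ∈ L) ↔ v ∈ leftQuotient (leftQuotient L u) y.1 := by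
          rw [← leftQuotient_append]; exact Iff.rfl
        rw [hx, hy, heq]
  -- cardinality of S
  have hScard : Nat.card S ≤ n - 2 := by
    have e : S ≃ ↥(Q \ {E, A}) :=
      { toFun := fun q => ⟨q.1.1, q.1.2, by
          simp only [Set.mem_insert_iff, Set.mem_singleton_iff]
          push_neg
          exact q.2⟩
        invFun := fun q => ⟨⟨q.1, q.2.1⟩, by
          have h2 := q.2.2
          simp only [Set.mem_insert_iff, Set.mem_singleton_iff] at h2
          push_neg at h2
          exact h2⟩
        left_inv := fun q => rfl
        right_inv := fun q => rfl }
    have hsub : ({E, A} : Set (Language α)) ⊆ Q := by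
      intro x hx
      rcases hx with rfl | rfl
      exacts [hEQ, hAQ]
    rw [Nat.card_congr e, Nat.card_coe_set_eq,
      Set.ncard_diff hsub ((Set.finite_singleton A).insert E),
      Set.ncard_pair hEA, ← Nat.card_coe_set_eq, hcard]
  calc syntacticComplexity L ≤ Nat.card (S → Q) :=
        Nat.card_le_card_of_injective _ hGinj
    _ = Nat.card Q ^ Nat.card S := Nat.card_fun
    _ = n ^ Nat.card S := by rw [hcard]
    _ ≤ n ^ (n - 2) := Nat.pow_le_pow_right (by omega) hScard
end

section
/- For every n ≥ 2 there exists a prefix-free regular language L with quotient complexity n and syntactic complexity exactly n^{n−2}. -/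
/-!
A DFA in which every state is reachable and distinct states accept distinct languages is
minimal, so its left quotients are the languages `M.acceptsFrom s`, and two nonempty words are
syntactically equivalent exactly when they induce the same transformation of the states.
The witness has the states of `σ`, a final state `f`, a sink `z`, and one letter for every
transformation `t` with `t f = t z = z`; the transformations of nonempty words are then
exactly these, and there are `|σ| ^ (|σ| - 2)` of them. Words of length at most one reach
every state from any start other than `f` and `z` and separate every pair of states.
Starting in `f` is only allowed when `σ = {f, z}`, where the language is `{ε}`.
-/

open Function

namespace DFA

variable {α : Type} {σ : Type*} (M : DFA α σ)

theorem leftQuotient_accepts (w : List α) :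
    leftQuotient M.accepts w = M.acceptsFrom (M.eval w) := by
  ext x
  change M.evalFrom M.start (w ++ x) ∈ M.accept ↔ _
  rw [evalFrom_of_append]
  rfl

theorem evalFrom_sink {z : σ} (hz : ∀ a, M.step z a = z) (w : List α) : M.evalFrom z w = z := by
  induction w with
  | nil => rfl
  | cons a w ih => rw [evalFrom_cons, hz, ih]

theorem prefixFree_accepts {z : σ} (hz : z ∉ M.accept) (hsink : ∀ a, M.step z a = z)
    (hfinal : ∀ s ∈ M.accept, ∀ a, M.step s a = z) : PrefixFree M.accepts := by
  rintro x hx y hy ⟨_ | ⟨a, v⟩, rfl⟩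
  · exact (List.append_nil x).symm
  · rw [mem_accepts, eval, evalFrom_of_append, evalFrom_cons, hfinal _ hx, evalFrom_sink M hsink]
      at hy
    exact absurd hy hz

variable {M}

theorem quotientComplexity_accepts (hreach : Surjective M.eval)
    (hsep : Injective M.acceptsFrom) : quotientComplexity M.accepts = Nat.card σ := by
  have hquot : leftQuotient M.accepts = M.acceptsFrom ∘ M.eval := funext M.leftQuotient_accepts
  rw [quotientComplexity, hquot, hreach.range_comp, Nat.card_range_of_injective hsep]

theorem synRel_accepts_iff (hreach : Surjective M.eval) (hsep : Injective M.acceptsFrom)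
    {x y : {w : List α // w ≠ []}} :
    synRel M.accepts x y ↔ (M.evalFrom · x.1) = (M.evalFrom · y.1) := by
  have hmem (u w v : List α) :
      u ++ w ++ v ∈ M.accepts ↔ v ∈ M.acceptsFrom (M.evalFrom (M.eval u) w) := by
    rw [mem_accepts, mem_acceptsFrom, eval, evalFrom_of_append, evalFrom_of_append]
  simp only [synRel, hmem]
  constructor
  · intro h
    funext s
    obtain ⟨u, rfl⟩ := hreach s
    exact hsep (Set.ext (h u))
  · intro h u v
    rw [congrFun h]

theorem syntacticComplexity_accepts (hreach : Surjective M.eval)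
    (hsep : Injective M.acceptsFrom) :
    syntacticComplexity M.accepts =
      Nat.card (Set.range fun x : {w : List α // w ≠ []} => (M.evalFrom · x.1)) :=
  Nat.card_congr <| (Quot.congrRight fun _ _ => synRel_accepts_iff hreach hsep).trans
    (Setoid.quotientKerEquivRange _)

end DFA

section Witness

variable {σ : Type*} (f z : σ)

def prefixFreeMaps : Set (σ → σ) := {t | t f = z ∧ t z = z}

variable {f z}

noncomputable def prefixFreeMapsEquiv : prefixFreeMaps f z ≃ (({f, z}ᶜ : Set σ) → σ) := by
  classical
  exact {
    toFun t q := t.1 q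
    invFun g := ⟨fun q => if h : q ∈ ({f, z}ᶜ : Set σ) then g ⟨q, h⟩ else z, by
      simp [prefixFreeMaps]⟩
    left_inv t := by
      ext q
      by_cases h : q ∈ ({f, z}ᶜ : Set σ)
      · simp [h]
      · obtain rfl | rfl : q = f ∨ q = z := by simpa [or_iff_not_imp_left] using h
        · simp [t.2.1]
        · simp [t.2.2]
    right_inv g := by
      funext q
      simp [q.2] }

theorem card_prefixFreeMaps [Finite σ] (hfz : f ≠ z) :
    Nat.card (prefixFreeMaps f z) = Nat.card σ ^ (Nat.card σ - 2) := by
  rw [Nat.card_congr prefixFreeMapsEquiv, Nat.card_fun, Nat.card_coe_set_eq, Set.ncard_compl,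
    Set.ncard_pair hfz]

def prefixFreeDFA {α : Type} (δ : α → prefixFreeMaps f z) (s₀ : σ) : DFA α σ where
  step s a := (δ a).1 s
  start := s₀
  accept := {f}

variable {α : Type} {δ : α → prefixFreeMaps f z} {s₀ : σ}

theorem prefixFree_prefixFreeDFA (hfz : f ≠ z) : PrefixFree (prefixFreeDFA δ s₀).accepts :=
  DFA.prefixFree_accepts _ hfz.symm (fun a => (δ a).2.2)
    fun _ hs a => (Set.mem_singleton_iff.1 hs) ▸ (δ a).2.1

theorem prefixFreeDFA_eval_surjective (hδ : Surjective δ) (hs₀z : s₀ ≠ z)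
    (hs₀f : ∀ q, q ≠ f → q ≠ z → s₀ ≠ f) : Surjective (prefixFreeDFA δ s₀).eval := by
  classical
  intro q
  by_cases hq : q = s₀
  · exact ⟨[], hq.symm⟩
  obtain ⟨a, ha⟩ := hδ ⟨fun x => if x = f ∨ x = z then z else q, by simp [prefixFreeMaps]⟩
  refine ⟨[a], ?_⟩
  simp only [DFA.eval_singleton, prefixFreeDFA, ha]
  by_cases hqz : q = z
  · simp [hqz]
  have hs₀f' : s₀ ≠ f := by
    rintro rfl
    exact hs₀f q hq hqz rfl
  simp [hs₀f', hs₀z]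

theorem exists_forall_mem_acceptsFrom_prefixFreeDFA_iff (hδ : Surjective δ) (hfz : f ≠ z)
    {q : σ} (hqz : q ≠ z) : ∃ w, ∀ p, w ∈ (prefixFreeDFA δ s₀).acceptsFrom p ↔ p = q := by
  classical
  by_cases hqf : q = f
  · exact ⟨[], fun p => by rw [hqf]; rfl⟩
  obtain ⟨a, ha⟩ := hδ ⟨fun x => if x = q then f else z, by
    simp [prefixFreeMaps, Ne.symm hqf, Ne.symm hqz]⟩
  refine ⟨[a], fun p => ?_⟩
  simp only [DFA.mem_acceptsFrom, DFA.evalFrom_singleton, prefixFreeDFA, ha]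
  split_ifs with hpq <;> simp [hpq, hfz.symm]

theorem prefixFreeDFA_acceptsFrom_injective (hδ : Surjective δ) (hfz : f ≠ z) :
    Injective (prefixFreeDFA δ s₀).acceptsFrom := by
  intro p p' h
  obtain ⟨rfl, rfl⟩ | hp | hp' : (p = z ∧ p' = z) ∨ p ≠ z ∨ p' ≠ z := by tauto
  · rfl
  · obtain ⟨w, hw⟩ := exists_forall_mem_acceptsFrom_prefixFreeDFA_iff (s₀ := s₀) hδ hfz hp
    exact ((hw p').1 (h ▸ (hw p).2 rfl)).symm
  · obtain ⟨w, hw⟩ := exists_forall_mem_acceptsFrom_prefixFreeDFA_iff (s₀ := s₀) hδ hfz hp'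
    exact (hw p).1 (h ▸ (hw p').2 rfl)

theorem range_evalFrom_prefixFreeDFA (hδ : Surjective δ) :
    (Set.range fun x : {w : List α // w ≠ []} => ((prefixFreeDFA δ s₀).evalFrom · x.1)) =
      prefixFreeMaps f z := by
  have hsink := DFA.evalFrom_sink (prefixFreeDFA δ s₀) (z := z) fun a => (δ a).2.2
  ext t
  constructor
  · rintro ⟨⟨_ | ⟨a, w⟩, hw⟩, rfl⟩
    · exact absurd rfl hw
    · refine ⟨?_, ?_⟩ <;> simp only [DFA.evalFrom_cons, prefixFreeDFA, (δ a).2.1, (δ a).2.2] <;>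
        exact hsink w
  · intro ht
    obtain ⟨a, ha⟩ := hδ ⟨t, ht⟩
    exact ⟨⟨[a], List.cons_ne_nil a []⟩, funext fun s => by simp [prefixFreeDFA, ha]⟩

end Witness

/-- For every `n ≥ 2` there is a prefix-free regular language (over some finite
alphabet) with quotient complexity `n` and syntactic complexity exactly `n ^ (n - 2)`. -/
theorem statement2 (n : ℕ) (hn : 2 ≤ n) :
    ∃ (k : ℕ) (L : Language (Fin k)),
      PrefixFree L ∧ quotientComplexity L = n ∧ syntacticComplexity L = n ^ (n - 2) := by
  obtain ⟨m, rfl⟩ : ∃ m, n = m + 2 := ⟨n - 2, by omega⟩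
  let f : Fin (m + 2) := (Fin.last m).castSucc
  let z : Fin (m + 2) := Fin.last (m + 1)
  have hfz : f ≠ z := (Fin.castSucc_lt_last _).ne
  let δ := (Finite.equivFin (prefixFreeMaps f z)).symm
  have hδ : Surjective δ := δ.surjective
  have hreach : Surjective (prefixFreeDFA δ 0).eval :=
    prefixFreeDFA_eval_surjective hδ Fin.last_pos.ne fun q hqf hqz h0f => by
      simp only [f, z, Fin.ext_iff, Fin.val_last, Fin.val_castSucc, Fin.val_zero] at hqf hqz h0f
      omega
  have hsep := prefixFreeDFA_acceptsFrom_injective (s₀ := 0) hδ hfz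
  refine ⟨_, (prefixFreeDFA δ 0).accepts, prefixFree_prefixFreeDFA hfz, ?_, ?_⟩
  · rw [DFA.quotientComplexity_accepts hreach hsep, Nat.card_eq_fintype_card, Fintype.card_fin]
  · rw [DFA.syntacticComplexity_accepts hreach hsep, range_evalFrom_prefixFreeDFA hδ,
      card_prefixFreeMaps hfz, Nat.card_eq_fintype_card, Fintype.card_fin]
end

section
/- If L is a suffix-free regular language with minimal DFA having state set Q = {1,…,n}, initial state 1, and empty state n, then every transformation t of Q in the transition semigroup of the DFA satisfies: 1 is not in the range of t, nt = n, and for all j ≥ 1, either 1t^j = n or 1t^j ≠ it^j for all i with 1 < i < n. -/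
/-- No word of `L` is a proper suffix of another word of `L`. -/
def SuffixFree {α : Type} (L : Language α) : Prop :=
  ∀ x ∈ L, ∀ y ∈ L, x <:+ y → x = y

/-- If `L` is a suffix-free regular language whose minimal DFA has state set
`Q = {1,…,n}` (encoded as `Fin n`, state `i` ↦ index `i-1`), initial state `1`
and empty state `n`, then every transformation `t` of `Q` in the transition
semigroup (i.e. induced by a nonempty word `w`) satisfies: `1 ∉ rng t`,
`n t = n`, and for all `j ≥ 1`, either `1 t^j = n` or `1 t^j ≠ i t^j`
for all `i` with `1 < i < n`. -/
theorem statement4 {α : Type} (n : ℕ) (hn : 2 ≤ n) (M : DFA α (Fin n))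
    (hsf : SuffixFree M.accepts)
    (hstart : M.start.val = 0)
    (hempty : ∀ q : Fin n, q.val = n - 1 → ∀ w : List α, M.evalFrom q w ∉ M.accept)
    (hreach : ∀ q : Fin n, ∃ w : List α, M.eval w = q)
    (hdistinct : ∀ p q : Fin n,
      (∀ w : List α, M.evalFrom p w ∈ M.accept ↔ M.evalFrom q w ∈ M.accept) → p = q)
    (w : List α) (hw : w ≠ []) :
    (∀ q : Fin n, (M.evalFrom q w).val ≠ 0) ∧
    (∀ q : Fin n, q.val = n - 1 → M.evalFrom q w = q) ∧
    (∀ j : ℕ, 1 ≤ j → ∀ q : Fin n, q.val = 0 →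
      (((fun p => M.evalFrom p w)^[j] q).val = n - 1 ∨
        ∀ i : Fin n, i.val ≠ 0 → i.val ≠ n - 1 →
          (fun p => M.evalFrom p w)^[j] q ≠ (fun p => M.evalFrom p w)^[j] i)) := by
  have hn1 : n - 1 < n := by omega
  set s : Fin n := ⟨n - 1, hn1⟩ with hs
  have hsink : ∀ x : List α, M.evalFrom s x ∉ M.accept := hempty s rfl
  -- any dead state equals s
  have hdead : ∀ p : Fin n, (∀ x : List α, M.evalFrom p x ∉ M.accept) → p = s := by
    intro p hp
    exact hdistinct p s (fun x => by simp [hp x, hsink x])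
  -- L is nonempty
  have hLne : ∃ x : List α, x ∈ M.accepts := by
    by_contra h
    push_neg at h
    have h0 : (⟨0, by omega⟩ : Fin n) = s := by
      apply hdead
      intro x hx
      obtain ⟨u, hu⟩ := hreach ⟨0, by omega⟩
      apply h (u ++ x)
      rw [DFA.mem_accepts, DFA.eval, DFA.evalFrom_of_append]
      rw [DFA.eval] at hu
      rw [hu]
      exact hx
    have := congrArg Fin.val h0
    simp [hs] at this
    omega
  -- iterate lemma
  have hiter : ∀ (j : ℕ) (p : Fin n),
      (fun p => M.evalFrom p w)^[j] p = M.evalFrom p (List.replicate j w).flatten := by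
    intro j
    induction j with
    | zero => intro p; simp [DFA.evalFrom]
    | succ j ih =>
      intro p
      rw [Function.iterate_succ_apply, ih]
      have : (List.replicate (j+1) w).flatten = w ++ (List.replicate j w).flatten := by
        simp [List.replicate_succ]
      rw [this, DFA.evalFrom_of_append]
  refine ⟨?_, ?_, ?_⟩
  · -- start not in range
    intro q hq0
    have hq : M.evalFrom q w = M.start := by
      apply Fin.ext
      rw [hq0, hstart]
    obtain ⟨u, hu⟩ := hreach q
    obtain ⟨x, hx⟩ := hLne
    have hmem : (u ++ w) ++ x ∈ M.accepts := by
      rw [DFA.mem_accepts] at hx ⊢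
      rw [DFA.eval, DFA.evalFrom_of_append, DFA.evalFrom_of_append]
      rw [DFA.eval] at hu
      rw [hu, hq]
      exact hx
    have heq := hsf x hx _ hmem ⟨u ++ w, by simp⟩
    have hl := congrArg List.length heq
    simp only [List.length_append] at hl
    have : w.length = 0 := by omega
    exact hw (List.eq_nil_of_length_eq_zero this)
  · -- sink fixed
    intro q hq
    have hqs : q = s := Fin.ext hq
    subst hqs
    apply hdead
    intro x hx
    rw [← DFA.evalFrom_of_append] at hx
    exact hsink _ hx
  · -- part 3
    intro j hj q hq0
    have hqstart : q = M.start := Fin.ext (by rw [hq0, hstart])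
    by_cases hp : (((fun p => M.evalFrom p w)^[j] q).val = n - 1)
    · exact Or.inl hp
    · right
      intro i hi0 hin heq
      set W := (List.replicate j w).flatten with hW
      have hqW : (fun p => M.evalFrom p w)^[j] q = M.evalFrom q W := hiter j q
      have hiW : (fun p => M.evalFrom p w)^[j] i = M.evalFrom i W := hiter j i
      set p := M.evalFrom q W with hpdef
      have hps : p ≠ s := by
        intro h
        apply hp
        rw [hqW, h]
      -- p is not dead
      have : ¬ (∀ x : List α, M.evalFrom p x ∉ M.accept) := fun h => hps (hdead p h)
      push_neg at this
      obtain ⟨x, hx⟩ := this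
      have hWx : W ++ x ∈ M.accepts := by
        rw [DFA.mem_accepts, DFA.eval, DFA.evalFrom_of_append, ← hqstart]
        exact hx
      obtain ⟨u, hu⟩ := hreach i
      have huWx : u ++ (W ++ x) ∈ M.accepts := by
        rw [DFA.mem_accepts, DFA.eval, DFA.evalFrom_of_append, DFA.evalFrom_of_append]
        rw [DFA.eval] at hu
        rw [hu]
        have : M.evalFrom i W = p := by rw [← hiW, ← heq]; exact hqW
        rw [this]
        exact hx
      have heq2 := hsf (W ++ x) hWx _ huWx ⟨u, rfl⟩
      have hl := congrArg List.length heq2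
      simp only [List.length_append] at hl
      have hu0 : u = [] := List.eq_nil_of_length_eq_zero (by omega)
      rw [hu0] at hu
      have : i = M.start := by rw [← hu]; rfl
      apply hi0
      rw [this, hstart]
end

section
/- Let Q = {1,…,n} with n ≥ 3 and let B_sf(n) be the set of transformations t of Q such that 1 ∉ rng(t), nt = n, and for all j ≥ 1, either 1t^j = n or 1t^j ≠ it^j for all 1 < i < n. Then every t ∈ B_sf(n) has a principal sequence: there exists j ≥ 0 with 1t^j = n. -/
/-- `t` belongs to `B_sf(n)`: states `{1,…,n}` are encoded as `Fin n` (state `i` ↦ index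
`i-1`); `1 ∉ rng t`, `n t = n`, and for every `j ≥ 1` either `1 t^j = n` or
`1 t^j ≠ i t^j` for all `i` with `1 < i < n`. -/
def IsBsf (n : ℕ) (t : Fin n → Fin n) : Prop :=
  (∀ q : Fin n, (t q).val ≠ 0) ∧
  (∀ q : Fin n, q.val = n - 1 → t q = q) ∧
  (∀ j : ℕ, 1 ≤ j → ∀ q : Fin n, q.val = 0 →
    ((t^[j] q).val = n - 1 ∨
      ∀ i : Fin n, i.val ≠ 0 → i.val ≠ n - 1 → t^[j] q ≠ t^[j] i))

lemma iter_fixed {n : ℕ} {t : Fin n → Fin n} (h : ∀ q : Fin n, q.val = n - 1 → t q = q)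
    {q : Fin n} (hq : q.val = n - 1) : ∀ j, t^[j] q = q := by
  intro j
  induction j with
  | zero => rfl
  | succ m ih => rw [Function.iterate_succ_apply', ih, h q hq]

lemma iter_ne_zero {n : ℕ} {t : Fin n → Fin n} (h : ∀ q : Fin n, (t q).val ≠ 0)
    (q : Fin n) {j : ℕ} (hj : 1 ≤ j) : (t^[j] q).val ≠ 0 := by
  obtain ⟨m, rfl⟩ := Nat.exists_eq_add_of_le hj
  rw [add_comm, Function.iterate_succ_apply']
  exact h _

/-- Every `t ∈ B_sf(n)` has a principal sequence: the sequence `1, 1t, 1t², …`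
eventually reaches `n`. -/
theorem statement5 (n : ℕ) (hn : 3 ≤ n) (t : Fin n → Fin n) (ht : IsBsf n t) :
    ∀ q : Fin n, q.val = 0 → ∃ j : ℕ, (t^[j] q).val = n - 1 := by
  intro q hq
  by_contra h
  push_neg at h
  obtain ⟨h1, h2, h3⟩ := ht
  -- pigeonhole: some repeat in the orbit
  have hcard : Fintype.card (Fin n) < Fintype.card (Fin (n + 1)) := by simp
  obtain ⟨a, b, hab, heq⟩ := Fintype.exists_ne_map_eq_of_card_lt
    (fun m : Fin (n + 1) => t^[m.val] q) hcard
  wlog hlt : a.val < b.val generalizing a b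
  · have hba : b.val < a.val := lt_of_le_of_ne (not_lt.mp hlt) (Fin.val_ne_of_ne hab.symm)
    exact this b a hab.symm heq.symm hba
  set j := a.val
  set k := b.val
  have heq' : t^[j] q = t^[k] q := heq
  set i := t^[k - j] q with hi
  have hji : t^[j] i = t^[k] q := by
    rw [hi, ← Function.iterate_add_apply]
    congr 1
    omega
  rcases Nat.eq_zero_or_pos j with hj0 | hj1
  · -- j = 0 : q = t^[k] q but latter has nonzero val
    have : (t^[k] q).val ≠ 0 := iter_ne_zero h1 q (by omega)
    rw [← heq', hj0] at this
    exact this hq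
  · have hiv0 : i.val ≠ 0 := iter_ne_zero h1 q (by omega)
    have hivn : i.val ≠ n - 1 := h (k - j)
    rcases h3 j hj1 q hq with hc | hc
    · exact h j hc
    · exact hc i hiv0 hivn (by rw [hji, heq'])
end

section
/- Let Q = {1,…,n} with n ≥ 6, and define W^{≥6}_sf(n) as the set of transformations t of Q with 1 ∉ rng(t), nt = n, and such that either 1t = n, or it = n for all i with 2 ≤ i ≤ n−1. Then W^{≥6}_sf(n) is closed under composition and has cardinality (n−1)^{n−2} + (n−2). -/
/-- `t` belongs to `W^{≥6}_sf(n)`: states `{1,…,n}` are encoded as `Fin n` (state `i` ↦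
index `i-1`); `1 ∉ rng t`, `n t = n`, and either `1 t = n`, or `i t = n` for all `i`
with `2 ≤ i ≤ n-1`. -/
def IsW6sf (n : ℕ) (t : Fin n → Fin n) : Prop :=
  (∀ q : Fin n, (t q).val ≠ 0) ∧
  (∀ q : Fin n, q.val = n - 1 → t q = q) ∧
  ((∀ q : Fin n, q.val = 0 → (t q).val = n - 1) ∨
    (∀ i : Fin n, i.val ≠ 0 → i.val ≠ n - 1 → (t i).val = n - 1))

/-- For `n ≥ 6`, `W^{≥6}_sf(n)` is closed under composition and has cardinality
`(n-1)^(n-2) + (n-2)`. -/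
theorem statement8 (n : ℕ) (hn : 6 ≤ n) :
    (∀ s t : Fin n → Fin n, IsW6sf n s → IsW6sf n t → IsW6sf n (t ∘ s)) ∧
    Nat.card {t : Fin n → Fin n // IsW6sf n t} = (n - 1) ^ (n - 2) + (n - 2) := by
  classical
  haveI : NeZero n := ⟨by omega⟩
  have hLlt : n - 1 < n := by omega
  set L : Fin n := ⟨n - 1, hLlt⟩ with hLdef
  have hLval : (L : Fin n).val = n - 1 := rfl
  have h0val : ((0 : Fin n)).val = 0 := rfl
  have hL0 : L ≠ (0 : Fin n) := by
    intro h
    have := congrArg Fin.val h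
    simp only [hLval, h0val] at this
    omega
  constructor
  · rintro s t ⟨hs1, hs2, hs3⟩ ⟨ht1, ht2, ht3⟩
    refine ⟨fun q => ht1 _, fun q hq => by
      simp only [Function.comp_apply, hs2 q hq, ht2 q hq], ?_⟩
    rcases hs3 with h | h
    · left; intro q hq
      rw [Function.comp_apply, ht2 (s q) (h q hq)]
      exact h q hq
    · right; intro i h1 h2
      rw [Function.comp_apply, ht2 (s i) (h i h1 h2)]
      exact h i h1 h2
  · set S1 : Fin n → Finset (Fin n) := fun i =>
      if i = 0 ∨ i = L then {L} else Finset.univ.filter (fun x => x ≠ 0) with hS1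
    set S2 : Fin n → Finset (Fin n) := fun i =>
      if i = 0 then Finset.univ.filter (fun x => x ≠ 0 ∧ x ≠ L) else {L} with hS2
    have valeq : ∀ q : Fin n, q.val = n - 1 ↔ q = L := by
      intro q; rw [Fin.ext_iff]
    have valzero : ∀ q : Fin n, q.val = 0 ↔ q = 0 := by
      intro q; rw [Fin.ext_iff]; rfl
    have key : (Finset.univ.filter fun t => IsW6sf n t)
        = Fintype.piFinset S1 ∪ Fintype.piFinset S2 := by
      ext t
      simp only [Finset.mem_filter, Finset.mem_univ, true_and, Finset.mem_union,
        Fintype.mem_piFinset, hS1, hS2]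
      constructor
      · rintro ⟨h1, h2, h3⟩
        by_cases h0 : t 0 = L
        · left
          intro i
          by_cases hi : i = 0 ∨ i = L
          · rw [if_pos hi, Finset.mem_singleton]
            rcases hi with rfl | rfl
            · exact h0
            · exact h2 L rfl
          · rw [if_neg hi, Finset.mem_filter]
            refine ⟨Finset.mem_univ _, ?_⟩
            intro hz
            exact h1 i (by rw [hz]; rfl)
        · right
          have h3' : ∀ i : Fin n, i.val ≠ 0 → i.val ≠ n - 1 → (t i).val = n - 1 := by
            rcases h3 with h3 | h3
            · exact absurd ((valeq _).mp (h3 0 rfl)) h0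
            · exact h3
          intro i
          by_cases hi : i = 0
          · subst hi
            rw [if_pos rfl, Finset.mem_filter]
            refine ⟨Finset.mem_univ _, ?_, h0⟩
            intro hz
            exact h1 0 (by rw [hz]; rfl)
          · rw [if_neg hi, Finset.mem_singleton]
            by_cases hiL : i = L
            · subst hiL; exact h2 L rfl
            · exact (valeq _).mp (h3' i (fun h => hi ((valzero _).mp h))
                (fun h => hiL ((valeq _).mp h)))
      · rintro (h | h)
        · have h0 : t 0 = L := by
            have := h 0
            rw [if_pos (Or.inl rfl), Finset.mem_singleton] at this
            exact this
          have hLfix : t L = L := by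
            have := h L
            rw [if_pos (Or.inr rfl), Finset.mem_singleton] at this
            exact this
          refine ⟨?_, ?_, Or.inl ?_⟩
          · intro q
            by_cases hq : q = 0 ∨ q = L
            · rcases hq with rfl | rfl
              · rw [h0, hLval]; omega
              · rw [hLfix, hLval]; omega
            · have := h q
              rw [if_neg hq, Finset.mem_filter] at this
              intro hz
              exact this.2 ((valzero _).mp hz)
          · intro q hq
            rw [(valeq q).mp hq, hLfix]
          · intro q hq
            rw [(valzero q).mp hq, h0, hLval]
        · have h0 := h 0
          rw [if_pos rfl, Finset.mem_filter] at h0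
          have hrest : ∀ i : Fin n, i ≠ 0 → t i = L := by
            intro i hi
            have := h i
            rw [if_neg hi, Finset.mem_singleton] at this
            exact this
          refine ⟨?_, ?_, Or.inr ?_⟩
          · intro q
            by_cases hq : q = 0
            · subst hq
              intro hz
              exact h0.2.1 ((valzero _).mp hz)
            · rw [hrest q hq, hLval]; omega
          · intro q hq
            rw [(valeq q).mp hq, hrest L hL0]
          · intro i hi hiL
            rw [hrest i (fun h => hi (by rw [h]; rfl)), hLval]
    have hdisj : Disjoint (Fintype.piFinset S1) (Fintype.piFinset S2) := by
      rw [Finset.disjoint_left]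
      intro t h1 h2
      have a1 := (Fintype.mem_piFinset.mp h1) 0
      have a2 := (Fintype.mem_piFinset.mp h2) 0
      rw [hS1] at a1; rw [hS2] at a2
      simp only [eq_self_iff_true, true_or, if_true, Finset.mem_singleton] at a1
      simp only [eq_self_iff_true, if_true, Finset.mem_filter, Finset.mem_univ,
        true_and] at a2
      exact a2.2 a1
    have cardfilter1 : (Finset.univ.filter (fun x : Fin n => x ≠ 0)).card = n - 1 := by
      rw [Finset.filter_ne', Finset.card_erase_of_mem (Finset.mem_univ _)]
      simp [Fintype.card_fin]
    have cardfilter2 :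
        (Finset.univ.filter (fun x : Fin n => x ≠ 0 ∧ x ≠ L)).card = n - 2 := by
      have : (Finset.univ.filter (fun x : Fin n => x ≠ 0 ∧ x ≠ L))
          = Finset.univ \ {0, L} := by
        ext x
        simp [and_comm]
      rw [this, Finset.card_sdiff_of_subset (Finset.subset_univ _)]
      rw [Finset.card_insert_of_notMem (by simpa using hL0.symm), Finset.card_singleton]
      simp [Fintype.card_fin]
    have cardpair : ({0, L} : Finset (Fin n)).card = 2 := by
      rw [Finset.card_insert_of_notMem (by simpa using hL0.symm), Finset.card_singleton]
    have c1 : (Fintype.piFinset S1).card = (n - 1) ^ (n - 2) := by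
      rw [Fintype.card_piFinset]
      have : ∀ i : Fin n, (S1 i).card = if i = 0 ∨ i = L then 1 else n - 1 := by
        intro i
        by_cases hi : i = 0 ∨ i = L
        · simp only [hS1, if_pos hi, Finset.card_singleton]
        · simp only [hS1, if_neg hi, cardfilter1]
      rw [Finset.prod_congr rfl (fun i _ => this i), Finset.prod_ite,
        Finset.prod_const, Finset.prod_const, one_pow, one_mul]
      congr 1
      have : (Finset.univ.filter (fun i : Fin n => ¬(i = 0 ∨ i = L)))
          = Finset.univ \ {0, L} := by
        ext x; simp [not_or]
      rw [this, Finset.card_sdiff_of_subset (Finset.subset_univ _), cardpair]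
      simp [Fintype.card_fin]
    have c2 : (Fintype.piFinset S2).card = n - 2 := by
      rw [Fintype.card_piFinset]
      have : ∀ i : Fin n, (S2 i).card = if i = 0 then n - 2 else 1 := by
        intro i
        by_cases hi : i = 0
        · simp only [hS2, if_pos hi, cardfilter2]
        · simp only [hS2, if_neg hi, Finset.card_singleton]
      rw [Finset.prod_congr rfl (fun i _ => this i), Finset.prod_ite,
        Finset.prod_const, Finset.prod_const, one_pow, mul_one]
      have : (Finset.univ.filter (fun i : Fin n => i = 0)) = {0} := by
        ext x; simp
      rw [this, Finset.card_singleton, pow_one]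
    rw [Nat.card_eq_fintype_card, Fintype.card_subtype, key,
      Finset.card_union_of_disjoint hdisj, c1, c2]
end

section
/- For n ≥ 6, the semigroup of all transformations t of Q = {1,…,n} with 1 ∉ rng(t), nt = n, and (1t = n or it = n for all 2 ≤ i ≤ n−1), is generated by the following n+2 transformations: a₁ = (1→n)(2,3,…,n−1), a₂ = (1→n)(2,3), a₃ = (1→n)(n−1→2), b_i = (1→n)(i+1→n) for 1 ≤ i ≤ n−2, and c = [2, n, n, …, n] (mapping 1 to 2 and everything else to n). -/
/-- Realize a transformation written in 1-based notation (a function `ℕ → ℕ` on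
`{1,…,n}`) as an element of `Function.End (Fin n)` (state `i` ↦ index `i-1`). -/
def tr (n : ℕ) (f : ℕ → ℕ) : Function.End (Fin n) :=
  fun q => if h : f (q.val + 1) - 1 < n then ⟨f (q.val + 1) - 1, h⟩ else q

/-- `a₁ = (1→n)(2,3,…,n-1)`. -/
def a1f (n : ℕ) : ℕ → ℕ := fun i =>
  if i = 1 then n else if i = n - 1 then 2 else if i < n - 1 then i + 1 else i

/-- `a₂ = (1→n)(2,3)`. -/
def a2f (n : ℕ) : ℕ → ℕ := fun i =>
  if i = 1 then n else if i = 2 then 3 else if i = 3 then 2 else i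

/-- `a₃ = (1→n)(n-1→2)`. -/
def a3f (n : ℕ) : ℕ → ℕ := fun i =>
  if i = 1 then n else if i = n - 1 then 2 else i

/-- `b_k = (1→n)(k+1→n)`. -/
def bkf (n k : ℕ) : ℕ → ℕ := fun i =>
  if i = 1 then n else if i = k + 1 then n else i

/-- `c = [2, n, n, …, n]`. -/
def cf (n : ℕ) : ℕ → ℕ := fun i => if i = 1 then 2 else n

/-!
Write the states `1, …, n` as `0, …, n - 1`, so that `1` is `0` and `n` is `Fin.last`, and call
`2, …, n - 1` the middle. The transformations that fix `n`, send `1` to `n` and map the middle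
into itself form a copy of the full transformation monoid of the middle, in which `a₁`, `a₂`, `a₃`
are a full cycle, a transposition and a collapse; by Piccard's theorem they generate it.
Composing with the `b_i` sends further middle states to `n`, which gives every `t` with `1t = n`;
every other `t` of the semigroup is `g c` with `g` of the first kind sending `2` to `1t` and
everything else to `n`. Conversely the generators satisfy the defining conditions, which are
preserved by composition.
-/

open Equiv Function Finset

namespace Function.End

variable {α : Type*}

@[simp] lemma mul_apply (f g : Function.End α) (a : α) : (f * g) a = f (g a) := rfl

@[simp] lemma _root_.MulAction.toEndHom_perm_apply (σ : Perm α) (a : α) :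
    MulAction.toEndHom σ a = σ a := rfl

variable [DecidableEq α]

/-- The paper's `(a → b)`. -/
def collapse (a b : α) : Function.End α := update id a b

lemma collapse_apply (a b w : α) : collapse a b w = if w = a then b else w := by
  simp [collapse, update_apply]

theorem collapse_eq_conj (σ : Perm α) (x y : α) :
    collapse x y =
      MulAction.toEndHom σ⁻¹ * collapse (σ x) (σ y) * MulAction.toEndHom σ := by
  funext w
  rw [mul_apply, mul_apply, collapse_apply, collapse_apply]
  by_cases hw : w = x <;> simp [hw, σ.injective.eq_iff]

end Function.End

open Function.End

theorem Equiv.Perm.exists_apply_eq_and_apply_eq {α : Type*} [DecidableEq α] {a b x y : α}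
    (hab : a ≠ b) (hxy : x ≠ y) : ∃ σ : Perm α, σ x = a ∧ σ y = b := by
  have hay : a ≠ swap x a y := by
    simpa only [swap_apply_left] using (swap x a).injective.ne hxy
  refine ⟨swap (swap x a y) b * swap x a, ?_, ?_⟩
  · rw [Perm.mul_apply, swap_apply_left, swap_apply_of_ne_of_ne hay hab]
  · rw [Perm.mul_apply, swap_apply_left]

theorem Subgroup.closure_subset_of_subsemigroup {G : Type*} [Group G] [Finite G]
    {s : Set G} {T : Subsemigroup G} (hs : s ⊆ T) (h1 : (1 : G) ∈ T) :
    (Subgroup.closure s : Set G) ⊆ T := by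
  let M : Submonoid G := { T with one_mem' := h1 }
  rw [← Subgroup.coe_toSubmonoid, Subgroup.closure_toSubmonoid_of_finite]
  exact (Submonoid.closure_le (S := M)).2 hs

namespace Subsemigroup

variable {α : Type*} [DecidableEq α] [Fintype α] {S : Subsemigroup (Function.End α)}

omit [Fintype α] in
theorem collapse_mem_of_perm_mem (hperm : ∀ σ : Perm α, MulAction.toEndHom σ ∈ S)
    {a b : α} (hab : a ≠ b) (h : collapse a b ∈ S) {x y : α} (hxy : x ≠ y) :
    collapse x y ∈ S := by
  obtain ⟨σ, rfl, rfl⟩ := Perm.exists_apply_eq_and_apply_eq hab hxy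
  rw [collapse_eq_conj σ x y]
  exact mul_mem (mul_mem (hperm σ⁻¹) h) (hperm σ)

theorem mem_of_perm_mem_of_collapse_mem (hperm : ∀ σ : Perm α, MulAction.toEndHom σ ∈ S)
    {a b : α} (hab : a ≠ b) (h : collapse a b ∈ S) (f : Function.End α) : f ∈ S := by
  by_cases hf : Injective f
  · exact hperm (Equiv.ofBijective f hf.bijective_of_finite)
  obtain ⟨x₁, x₂, hfx, hx⟩ := not_injective_iff.mp hf
  obtain ⟨y, hy⟩ : ∃ y, ∀ w, f w ≠ y := by
    simpa [Surjective] using mt Finite.injective_iff_surjective.2 hf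
  obtain ⟨f', hf'x₁, hf'⟩ : ∃ f' : Function.End α, f' x₁ = y ∧ ∀ w, w ≠ x₁ → f' w = f w :=
    ⟨update f x₁ y, update_self _ _ _, fun w hw => update_of_ne hw _ _⟩
  have hgrow : univ.image f ⊂ univ.image f' := by
    refine ssubset_iff_of_subset (fun v hv => ?_) |>.2 ⟨y, ?_, fun hyf => ?_⟩
    · obtain ⟨w, -, rfl⟩ := mem_image.1 hv
      by_cases hw : w = x₁
      · exact mem_image.2 ⟨x₂, mem_univ _, by rw [hf' x₂ hx.symm, ← hfx, hw]⟩
      · exact mem_image.2 ⟨w, mem_univ _, hf' w hw⟩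
    · exact mem_image.2 ⟨x₁, mem_univ _, hf'x₁⟩
    · obtain ⟨w, -, hw⟩ := mem_image.1 hyf
      exact hy w hw
  have hdecomp : f = collapse y (f x₁) * f' := by
    funext w
    rw [mul_apply, collapse_apply]
    by_cases hw : w = x₁
    · rw [hw, hf'x₁, if_pos rfl]
    · rw [hf' w hw, if_neg (hy w)]
  rw [hdecomp]
  exact mul_mem (collapse_mem_of_perm_mem hperm hab h (hy x₁).symm)
    (mem_of_perm_mem_of_collapse_mem hperm hab h f')
termination_by Fintype.card α - #(univ.image f)
decreasing_by
  have := card_lt_card hgrow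
  have := card_le_univ (univ.image f')
  omega

end Subsemigroup

theorem Fin.exists_castSucc_succ_eq {n : ℕ} {y : Fin (n + 2)} (h0 : y ≠ 0)
    (hl : y ≠ Fin.last _) : ∃ p : Fin n, p.castSucc.succ = y := by
  obtain ⟨y', rfl⟩ := Fin.exists_succ_eq.2 h0
  obtain ⟨p, rfl⟩ := Fin.exists_castSucc_eq (i := y').2 fun h => hl (by rw [h, Fin.succ_last])
  exact ⟨p, rfl⟩

theorem IsW6sf.mul {n : ℕ} {t s : Function.End (Fin n)} (ht : IsW6sf n t)
    (hs : IsW6sf n s) : IsW6sf n (t * s) := by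
  obtain ⟨ht0, htn, -⟩ := ht
  obtain ⟨-, hsn, hs1 | hsmid⟩ := hs
  · exact ⟨fun q => ht0 (s q), fun q hq => by simp [hsn q hq, htn q hq],
      Or.inl fun q hq => by simpa [htn _ (hs1 q hq)] using hs1 q hq⟩
  · exact ⟨fun q => ht0 (s q), fun q hq => by simp [hsn q hq, htn q hq],
      Or.inr fun q hq hq' => by simpa [htn _ (hsmid q hq hq')] using hsmid q hq hq'⟩

def w6sf (n : ℕ) : Subsemigroup (Function.End (Fin n)) where
  carrier := {t | IsW6sf n t}
  mul_mem' := IsW6sf.mul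

def generators (n : ℕ) : Set (Function.End (Fin n)) :=
  {tr n (a1f n), tr n (a2f n), tr n (a3f n), tr n (cf n)} ∪
    (fun k => tr n (bkf n k)) '' {k : ℕ | 1 ≤ k ∧ k ≤ n - 2}

theorem tr_apply {n : ℕ} {F : ℕ → ℕ} (q : Fin n) (h1 : 1 ≤ F (q + 1))
    (h2 : F (q + 1) ≤ n) : tr n F q = ⟨F (q + 1) - 1, by omega⟩ :=
  dif_pos (by omega)

namespace Wsf

variable {m : ℕ}

/-- The middle index `p` is the state `p + 2` of the paper. -/
def liftMiddle (f : Function.End (Fin (m + 2))) : Function.End (Fin (m + 4)) :=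
  Fin.cases (Fin.last _) (Fin.lastCases (Fin.last _) fun p => (f p).castSucc.succ)

@[simp] lemma liftMiddle_last (f : Function.End (Fin (m + 2))) :
    liftMiddle f (Fin.last _) = Fin.last _ := by
  conv_lhs => rw [← Fin.succ_last]
  simp only [liftMiddle, Fin.cases_succ, Fin.lastCases_last]

@[simp] lemma liftMiddle_zero (f : Function.End (Fin (m + 2))) :
    liftMiddle f 0 = Fin.last _ := by
  simp [liftMiddle]

@[simp] lemma liftMiddle_castSucc_succ (f : Function.End (Fin (m + 2))) (p : Fin (m + 2)) :
    liftMiddle f p.castSucc.succ = (f p).castSucc.succ := by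
  simp [liftMiddle]

theorem liftMiddle_mul (f g : Function.End (Fin (m + 2))) :
    liftMiddle (f * g) = liftMiddle f * liftMiddle g := by
  funext q
  induction q using Fin.cases with
  | zero => simp
  | succ r =>
    induction r using Fin.lastCases with
    | last => simp [Fin.succ_last]
    | cast p => simp

def liftMiddleHom : Function.End (Fin (m + 2)) →ₙ* Function.End (Fin (m + 4)) where
  toFun := liftMiddle
  map_mul' := liftMiddle_mul

theorem liftMiddle_mem {S : Subsemigroup (Function.End (Fin (m + 4)))}
    (hrot : liftMiddle (MulAction.toEndHom (finRotate (m + 2))) ∈ S)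
    (hswap : liftMiddle (MulAction.toEndHom (swap 0 1 : Perm (Fin (m + 2)))) ∈ S)
    (hcol : liftMiddle (collapse (Fin.last (m + 1)) 0) ∈ S) (f : Function.End (Fin (m + 2))) :
    liftMiddle f ∈ S := by
  let P := (S.comap liftMiddleHom).comap
    (MulAction.toEndHom : Perm (Fin (m + 2)) →* Function.End (Fin (m + 2))).toMulHom
  have hgen : {finRotate (m + 2), swap 0 (finRotate (m + 2) 0)} ⊆ (P : Set _) := by
    rw [finRotate_apply_zero]
    rintro σ (rfl | rfl)
    exacts [hrot, hswap]
  have hone : (1 : Perm (Fin (m + 2))) ∈ P := by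
    rw [← swap_mul_self 0 1]
    exact mul_mem (hgen (by simp)) (hgen (by simp))
  have hperm (σ : Perm (Fin (m + 2))) : σ ∈ P := by
    refine Subgroup.closure_subset_of_subsemigroup hgen hone ?_
    rw [Perm.closure_cycle_adjacent_swap (isCycle_finRotate_of_le (by omega))
      (support_finRotate_of_le (by omega))]
    trivial
  exact Subsemigroup.mem_of_perm_mem_of_collapse_mem (S := S.comap liftMiddleHom) hperm
    Fin.last_pos.ne' hcol f

def SendsFirstToLast (t : Function.End (Fin (m + 4))) : Prop :=
  t 0 = Fin.last _ ∧ t (Fin.last _) = Fin.last _ ∧ ∀ q, t q ≠ 0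

theorem sendsFirstToLast_liftMiddle (f : Function.End (Fin (m + 2))) :
    SendsFirstToLast (liftMiddle f) := by
  refine ⟨liftMiddle_zero f, liftMiddle_last f, fun q => ?_⟩
  induction q using Fin.cases with
  | zero => simp
  | succ r =>
    induction r using Fin.lastCases with
    | last => simp [Fin.succ_last]
    | cast p => simp

theorem exists_liftMiddle_eq {t : Function.End (Fin (m + 4))} (ht : SendsFirstToLast t)
    (hmid : ∀ q, t q = Fin.last _ → q = 0 ∨ q = Fin.last _) : ∃ f, liftMiddle f = t := by
  have (p : Fin (m + 2)) : ∃ r : Fin (m + 2), r.castSucc.succ = t p.castSucc.succ := by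
    refine Fin.exists_castSucc_succ_eq (ht.2.2 _) fun h => ?_
    rcases hmid _ h with h' | h'
    · exact Fin.succ_ne_zero _ h'
    · exact Fin.castSucc_ne_last _ (Fin.succ_injective _ (h'.trans (Fin.succ_last _).symm))
  obtain ⟨f, hf⟩ : ∃ f : Function.End (Fin (m + 2)), _ := Classical.skolem.1 this
  refine ⟨f, funext fun q => ?_⟩
  induction q using Fin.cases with
  | zero => simp [ht.1]
  | succ r =>
    induction r using Fin.lastCases with
    | last => simp [Fin.succ_last, ht.2.1]
    | cast p => simp [hf]

def b (x : Fin (m + 4)) : Function.End (Fin (m + 4)) :=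
  fun q => if q = 0 ∨ q = x then Fin.last _ else q

theorem sendsFirstToLast_b (x : Fin (m + 4)) : SendsFirstToLast (b x) := by
  refine ⟨if_pos (Or.inl rfl), ?_, fun q => ?_⟩ <;> unfold b <;> split_ifs with h
  · rfl
  · rfl
  · exact Fin.last_pos.ne'
  · exact not_or.1 h |>.1

theorem mem_of_sendsFirstToLast {S : Subsemigroup (Function.End (Fin (m + 4)))}
    (hlift : ∀ f, liftMiddle f ∈ S) (hb : ∀ x, x ≠ 0 → x ≠ Fin.last _ → b x ∈ S)
    {t : Function.End (Fin (m + 4))} (ht : SendsFirstToLast t) : t ∈ S := by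
  by_cases hmid : ∀ q, t q = Fin.last _ → q = 0 ∨ q = Fin.last _
  · obtain ⟨f, rfl⟩ := exists_liftMiddle_eq ht hmid
    exact hlift f
  push Not at hmid
  obtain ⟨x, hxt, hx0, hxl⟩ := hmid
  have h1 : (1 : Fin (m + 4)) ≠ Fin.last _ := by simp [Fin.ext_iff]
  obtain ⟨t', ht'x, ht'ne⟩ :
      ∃ t' : Function.End (Fin (m + 4)), t' x = 1 ∧ ∀ q, q ≠ x → t' q = t q :=
    ⟨update t x 1, update_self _ _ _, fun q hq => update_of_ne hq _ _⟩
  have hsends : SendsFirstToLast t' := by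
    refine ⟨by rw [ht'ne 0 hx0.symm, ht.1], by rw [ht'ne _ hxl.symm, ht.2.1], fun q => ?_⟩
    by_cases hq : q = x
    · rw [hq, ht'x]; exact one_ne_zero
    · rw [ht'ne q hq]; exact ht.2.2 q
  have hdecomp : t = t' * b x := by
    funext q
    rw [Function.End.mul_apply, b]
    split_ifs with hq
    · rcases hq with rfl | rfl
      · rw [ht.1, hsends.2.1]
      · rw [hxt, hsends.2.1]
    · rw [ht'ne q (not_or.1 hq).2]
  have hfewer : {q | t' q = Fin.last _}.ncard < {q | t q = Fin.last _}.ncard := by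
    refine Set.ncard_lt_ncard (Set.ssubset_iff_of_subset (fun q hq => ?_) |>.2 ⟨x, hxt, ?_⟩)
    · rwa [Set.mem_ofPred_eq, ← ht'ne q (by rintro rfl; exact h1 (ht'x.symm.trans hq))]
    · simpa [ht'x] using h1
  rw [hdecomp]
  exact mul_mem (mem_of_sendsFirstToLast hlift hb hsends) (hb x hx0 hxl)
termination_by {q | t q = Fin.last _}.ncard

def c : Function.End (Fin (m + 4)) := fun q => if q = 0 then 1 else Fin.last _

theorem isW6sf_iff {t : Function.End (Fin (m + 4))} :
    IsW6sf (m + 4) t ↔ (∀ q, t q ≠ 0) ∧ t (Fin.last _) = Fin.last _ ∧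
      (t 0 = Fin.last _ ∨ ∀ q, q ≠ 0 → q ≠ Fin.last _ → t q = Fin.last _) := by
  have hlast (q : Fin (m + 4)) : q.val = m + 4 - 1 ↔ q = Fin.last _ := by simp [Fin.ext_iff]
  have hzero (q : Fin (m + 4)) : q.val = 0 ↔ q = 0 := Fin.val_eq_zero_iff
  simp only [IsW6sf, ne_eq, hzero, hlast, forall_eq]

theorem SendsFirstToLast.isW6sf {t : Function.End (Fin (m + 4))} (ht : SendsFirstToLast t) :
    IsW6sf (m + 4) t :=
  isW6sf_iff.2 ⟨ht.2.2, ht.2.1, Or.inl ht.1⟩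

theorem isW6sf_c : IsW6sf (m + 4) c := by
  refine isW6sf_iff.2 ⟨fun q => ?_, if_neg Fin.last_pos.ne', Or.inr fun q hq _ => if_neg hq⟩
  unfold c
  split_ifs
  exacts [one_ne_zero, Fin.last_pos.ne']

theorem _root_.IsW6sf.sendsFirstToLast_or_exists_eq_mul_c {t : Function.End (Fin (m + 4))}
    (ht : IsW6sf (m + 4) t) : SendsFirstToLast t ∨ ∃ g, SendsFirstToLast g ∧ t = g * c := by
  obtain ⟨ht0, htl, ht1 | htmid⟩ := isW6sf_iff.1 ht
  · exact Or.inl ⟨ht1, htl, ht0⟩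
  refine Or.inr ⟨update (fun _ => Fin.last _) 1 (t 0), ⟨?_, ?_, fun q => ?_⟩, funext fun q => ?_⟩
  · exact update_of_ne zero_ne_one _ _
  · exact update_of_ne (by simp [Fin.ext_iff]) _ _
  · rw [update_apply]
    split_ifs
    exacts [ht0 0, Fin.last_pos.ne']
  · change t q = update (fun _ => Fin.last _) 1 (t 0) (c q)
    unfold c
    split_ifs with hq
    · rw [hq, update_self]
    · rw [update_of_ne (by simp [Fin.ext_iff])]
      by_cases hql : q = Fin.last _
      · rw [hql, htl]
      · exact htmid q hq hql

theorem tr_eq_liftMiddle {F : ℕ → ℕ} {f : Function.End (Fin (m + 2))} (h1 : F 1 = m + 4)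
    (hlast : F (m + 4) = m + 4) (hmid : ∀ p : Fin (m + 2), F (p + 2) = f p + 2) :
    tr (m + 4) F = liftMiddle f := by
  funext q
  induction q using Fin.cases with
  | zero => rw [liftMiddle_zero, tr_apply 0 (by simp [h1]) (by simp [h1])]; ext; simp [h1]
  | succ r =>
    induction r using Fin.lastCases with
    | last =>
      rw [Fin.succ_last, liftMiddle_last, tr_apply _ (by simp [hlast]) (by simp [hlast])]
      ext; simp [hlast]
    | cast p =>
      have hp : F (p.castSucc.succ + 1) = f p + 2 := hmid p
      have := (f p).isLt
      rw [liftMiddle_castSucc_succ, tr_apply _ (by omega) (by omega)]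
      ext
      simpa using hp

theorem tr_a1f :
    tr (m + 4) (a1f (m + 4)) = liftMiddle (MulAction.toEndHom (finRotate (m + 2))) :=
  tr_eq_liftMiddle (by simp [a1f]) (by simp [a1f]) fun p => by
    have := p.isLt
    simp only [a1f, MulAction.toEndHom_perm_apply, coe_finRotate, Fin.ext_iff, Fin.val_last]
    split_ifs <;> omega

theorem tr_a2f :
    tr (m + 4) (a2f (m + 4)) = liftMiddle (MulAction.toEndHom (swap 0 1 : Perm (Fin (m + 2)))) :=
  tr_eq_liftMiddle (by simp [a2f]) (by simp [a2f]) fun p => by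
    simp only [a2f, MulAction.toEndHom_perm_apply, swap_apply_def, Fin.ext_iff]
    split_ifs <;> simp_all

theorem tr_a3f : tr (m + 4) (a3f (m + 4)) = liftMiddle (collapse (Fin.last (m + 1)) 0) :=
  tr_eq_liftMiddle (by simp [a3f]) (by simp [a3f]) fun p => by
    have := p.isLt
    simp only [a3f, collapse_apply, Fin.ext_iff, Fin.val_last]
    split_ifs <;> simp_all

theorem tr_bkf (x : Fin (m + 4)) : tr (m + 4) (bkf (m + 4) x) = b x := by
  funext q
  have := q.isLt
  rw [tr_apply q (by unfold bkf; split_ifs <;> omega) (by unfold bkf; split_ifs <;> omega)]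
  simp only [bkf, b, Fin.ext_iff]
  split_ifs <;> simp_all

theorem tr_cf : tr (m + 4) (cf (m + 4)) = c := by
  funext q
  rw [tr_apply q (by unfold cf; split_ifs <;> omega) (by unfold cf; split_ifs <;> omega)]
  simp only [cf, c, Fin.ext_iff]
  split_ifs <;> simp_all

theorem closure_generators_le_w6sf :
    Subsemigroup.closure (generators (m + 4)) ≤ w6sf (m + 4) := by
  refine Subsemigroup.closure_le.2 ?_
  rintro g ((rfl | rfl | rfl | rfl) | ⟨j, ⟨-, hj⟩, rfl⟩)
  · exact tr_a1f ▸ (sendsFirstToLast_liftMiddle _).isW6sf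
  · exact tr_a2f ▸ (sendsFirstToLast_liftMiddle _).isW6sf
  · exact tr_a3f ▸ (sendsFirstToLast_liftMiddle _).isW6sf
  · exact tr_cf ▸ isW6sf_c
  · change IsW6sf _ (tr (m + 4) (bkf (m + 4) (⟨j, by omega⟩ : Fin (m + 4))))
    exact tr_bkf _ ▸ (sendsFirstToLast_b _).isW6sf

theorem mem_closure_generators {t : Function.End (Fin (m + 4))} (ht : IsW6sf (m + 4) t) :
    t ∈ Subsemigroup.closure (generators (m + 4)) := by
  set S := Subsemigroup.closure (generators (m + 4))
  have hgen {g} (hg : g ∈ generators (m + 4)) : g ∈ S := Subsemigroup.subset_closure hg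
  have hlift := liftMiddle_mem (S := S)
    (by rw [← tr_a1f]; exact hgen (by simp [generators]))
    (by rw [← tr_a2f]; exact hgen (by simp [generators]))
    (by rw [← tr_a3f]; exact hgen (by simp [generators]))
  have hb (x : Fin (m + 4)) (hx0 : x ≠ 0) (hxl : x ≠ Fin.last _) : b x ∈ S := by
    have h1 := Fin.pos_iff_ne_zero.2 hx0
    have h2 := Fin.val_lt_last hxl
    exact tr_bkf x ▸ hgen (Or.inr ⟨x, ⟨h1, by omega⟩, rfl⟩)
  have hc : c ∈ S := by rw [← tr_cf]; exact hgen (by simp [generators])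
  rcases ht.sendsFirstToLast_or_exists_eq_mul_c with h | ⟨g, hg, rfl⟩
  · exact mem_of_sendsFirstToLast hlift hb h
  · exact mul_mem (mem_of_sendsFirstToLast hlift hb hg) hc

end Wsf

/-- For `n ≥ 6`, the semigroup `W^{≥6}_sf(n)` is generated by the `n+2`
transformations `a₁, a₂, a₃, b₁, …, b_{n-2}, c`. -/
theorem statement9 (n : ℕ) (hn : 6 ≤ n) :
    ∀ t : Function.End (Fin n),
      t ∈ Subsemigroup.closure
        ({tr n (a1f n), tr n (a2f n), tr n (a3f n), tr n (cf n)} ∪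
          (fun k => tr n (bkf n k)) '' {k : ℕ | 1 ≤ k ∧ k ≤ n - 2}) ↔
      IsW6sf n t := by
  obtain ⟨m, rfl⟩ : ∃ m, n = m + 4 := ⟨n - 4, by omega⟩
  exact fun t => ⟨fun ht => Wsf.closure_generators_le_w6sf ht, Wsf.mem_closure_generators⟩
end

section
/- Let Q = {1,…,n} with n ≥ 6. Every transformation in the semigroup W^{≥6}_sf(n) = {t : 1 ∉ rng(t), nt = n, and (1t = n or it = n for all 2 ≤ i ≤ n−1)} satisfies the suffix-free condition: for all j ≥ 1, 1t^j = n or 1t^j ≠ it^j for all 1 < i < n. -/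
lemma fix_iter {n : ℕ} {t : Fin n → Fin n} (hfix : ∀ q : Fin n, q.val = n - 1 → t q = q)
    {x : Fin n} (hx : x.val = n - 1) : ∀ k : ℕ, (t^[k] x).val = n - 1 := by
  intro k
  induction k with
  | zero => simpa using hx
  | succ m ih =>
    rw [Function.iterate_succ_apply', hfix _ ih]
    exact ih

/-- For `n ≥ 6`, every `t ∈ W^{≥6}_sf(n)` satisfies the suffix-free condition of
`B_sf(n)`: for all `j ≥ 1`, `1 t^j = n` or `1 t^j ≠ i t^j` for all `1 < i < n`. -/
theorem statement11 (n : ℕ) (hn : 6 ≤ n) (t : Fin n → Fin n) (ht : IsW6sf n t) :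
    ∀ j : ℕ, 1 ≤ j → ∀ q : Fin n, q.val = 0 →
      ((t^[j] q).val = n - 1 ∨
        ∀ i : Fin n, i.val ≠ 0 → i.val ≠ n - 1 → t^[j] q ≠ t^[j] i) := by
  obtain ⟨h1, hfix, hcase⟩ := ht
  intro j hj q hq
  obtain ⟨m, rfl⟩ := Nat.exists_eq_add_of_le hj
  rcases hcase with hA | hB
  · left
    rw [add_comm, Function.iterate_add_apply]
    exact fix_iter hfix (hA q hq) m
  · by_cases hq' : (t^[1 + m] q).val = n - 1
    · exact Or.inl hq'
    · right
      intro i hi0 hin heq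
      have : (t^[1 + m] i).val = n - 1 := by
        rw [add_comm, Function.iterate_add_apply]
        exact fix_iter hfix (hB i hi0 hin) m
      exact hq' (heq ▸ this)
end

section
/- Let Q = {1,…,n} with n ≥ 3, and define W_bf(n) as the set of transformations t of Q with 1 ∉ rng(t), (n−1)t = nt = n, and such that for all distinct i,j ∈ Q either it = jt = n or it ≠ jt. Then W_bf(n) is a semigroup under composition, and its cardinality equals Σ_{k=0}^{n−2} C(n−2,k)² (n−2−k)!. -/
/-!
A transformation in `W_bf(n)` sends `n - 1` and `n` to the sink `n`, and on the other `n - 2`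
states it is a partial injection into `{2, …, n - 1}`, "undefined" being read as "sent to `n`".
A partial injection of an `m`-set into an `m`-set is a domain of some size `k` together with an
embedding of it, so there are `Σ_k C(m,k) · m!/(m-k)! = Σ_k C(m,k)² (m-k)!` of them, the last
step by `k ↦ m - k`. Composition preserves `W_bf(n)` because `n` is fixed and two states can
collide only at `n`.
-/

open Finset

/-- `t` belongs to `W_bf(n)`: states `{1,…,n}` are encoded as `Fin n` (state `i` ↦ index
`i-1`); `1 ∉ rng t`, `(n-1) t = n t = n`, and for all distinct `i, j` either
`i t = j t = n` or `i t ≠ j t`. -/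
def IsWbf (n : ℕ) (t : Fin n → Fin n) : Prop :=
  (∀ q : Fin n, (t q).val ≠ 0) ∧
  (∀ q : Fin n, q.val = n - 2 ∨ q.val = n - 1 → (t q).val = n - 1) ∧
  (∀ i j : Fin n, i ≠ j →
    ((t i).val = n - 1 ∧ (t j).val = n - 1) ∨ t i ≠ t j)

section PartialInjection

variable {α β : Type*} [Fintype α] [DecidableEq α]

def partialInjDomainEquiv (s : Finset α) :
    {f : {f : α → Option β // Set.InjOn f {a | (f a).isSome}} //
      ({a | (f.1 a).isSome} : Finset α) = s} ≃ (s ↪ β) where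
  toFun f := by
    have hdom (a : s) : (f.1.1 a).isSome := by
      simpa [← f.2] using a.2
    exact ⟨fun a => (f.1.1 a).get (hdom a), fun a b hab =>
      Subtype.ext (f.1.2 (hdom a) (hdom b) (Option.get_inj.1 hab))⟩
  invFun e := ⟨⟨fun a => if h : a ∈ s then some (e ⟨a, h⟩) else none, by
      intro a ha b hb hab
      simp only [Option.isSome_dite, SetLike.setOfPred_mem_eq, SetLike.mem_coe] at ha hb
      simpa [ha, hb] using hab⟩, by ext; simp⟩
  left_inv f := by
    obtain ⟨⟨f, hf⟩, rfl⟩ := f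
    ext a : 3
    by_cases ha : (f a).isSome
    · dsimp only
      rw [dif_pos (by simpa using ha)]
      exact Option.some_get ha
    · simp_all
  right_inv e := by ext; simp

def partialInjEquivSigma :
    {f : α → Option β // Set.InjOn f {a | (f a).isSome}} ≃ Σ s : Finset α, (s ↪ β) :=
  (Equiv.sigmaFiberEquiv fun f => ({a | (f.1 a).isSome} : Finset α)).symm.trans
    (Equiv.sigmaCongrRight partialInjDomainEquiv)

theorem card_partialInj [Fintype β] :
    Nat.card {f : α → Option β // Set.InjOn f {a | (f a).isSome}} =
      ∑ k ∈ range (Fintype.card α + 1),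
        (Fintype.card α).choose k * (Fintype.card β).descFactorial k := by
  rw [Nat.card_congr partialInjEquivSigma, Nat.card_sigma, ← powerset_univ]
  simp only [Nat.card_eq_fintype_card, Fintype.card_embedding_eq, Fintype.card_coe]
  rw [sum_powerset_apply_card]
  simp

end PartialInjection

theorem sum_choose_mul_descFactorial (m : ℕ) :
    ∑ k ∈ range (m + 1), m.choose k * m.descFactorial k =
      ∑ k ∈ range (m + 1), m.choose k ^ 2 * (m - k).factorial := by
  rw [← sum_range_reflect]
  refine sum_congr rfl fun k hk => ?_
  have hk : k ≤ m := Nat.lt_succ_iff.1 (mem_range.1 hk)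
  rw [Nat.add_sub_cancel, Nat.descFactorial_eq_factorial_mul_choose, Nat.choose_symm hk]
  ring

theorem IsWbf.comp {n : ℕ} {s t : Fin n → Fin n} (hs : IsWbf n s) (ht : IsWbf n t) :
    IsWbf n (t ∘ s) := by
  obtain ⟨-, hsSink, hsInj⟩ := hs
  obtain ⟨htZero, htSink, htInj⟩ := ht
  refine ⟨fun q => htZero (s q), fun q hq => htSink _ (.inr (hsSink q hq)), fun i j hij => ?_⟩
  by_cases hs_eq : s i = s j
  · have hi : (s i).val = n - 1 := ((hsInj i j hij).resolve_right (not_not.2 hs_eq)).1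
    refine .inl ⟨htSink _ (.inr hi), ?_⟩
    rw [Function.comp_apply, ← hs_eq]
    exact htSink _ (.inr hi)
  · exact htInj _ _ hs_eq

section PartialInjEncoding

variable {m : ℕ}

/-- Targets of the states `1, …, m` of `W_bf(m + 2)` (indices `0, …, m - 1`): `none` is the sink
(index `m + 1`) and `some i` is index `i + 1`, so the range is exactly the nonzero indices. -/
def wbfTarget : Option (Fin m) → Fin (m + 2)
  | none => Fin.last (m + 1)
  | some i => i.succ.castSucc

theorem wbfTarget_injective : Function.Injective (wbfTarget (m := m)) := by
  rintro (_ | i) (_ | j) h <;>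
    simp only [wbfTarget, Fin.ext_iff, Fin.val_last, Fin.val_succ, Fin.val_castSucc,
      Option.some.injEq] at h ⊢ <;> omega

theorem val_wbfTarget_ne_zero (o : Option (Fin m)) : (wbfTarget o).val ≠ 0 := by
  cases o <;> simp [wbfTarget]

theorem val_wbfTarget_eq_iff {o : Option (Fin m)} : (wbfTarget o).val = m + 1 ↔ o = none := by
  cases o with
  | none => simp [wbfTarget]
  | some i =>
    simp only [wbfTarget, Fin.val_castSucc, Fin.val_succ, reduceCtorEq, iff_false]
    omega

theorem exists_wbfTarget_eq {v : Fin (m + 2)} (hv : v.val ≠ 0) : ∃ o, wbfTarget o = v := by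
  induction v using Fin.cases with
  | zero => exact absurd rfl hv
  | succ w =>
    induction w using Fin.lastCases with
    | last => exact ⟨none, rfl⟩
    | cast i => exact ⟨some i, rfl⟩

def wbfOfPartialInj (g : Fin m → Option (Fin m)) (q : Fin (m + 2)) : Fin (m + 2) :=
  if h : q.val < m then wbfTarget (g ⟨q, h⟩) else Fin.last (m + 1)

variable {g : Fin m → Option (Fin m)} {q : Fin (m + 2)}

theorem wbfOfPartialInj_of_lt (h : q.val < m) : wbfOfPartialInj g q = wbfTarget (g ⟨q, h⟩) :=
  dif_pos h

theorem wbfOfPartialInj_of_le (h : m ≤ q.val) : wbfOfPartialInj g q = Fin.last (m + 1) :=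
  dif_neg (not_lt.2 h)

theorem isWbf_wbfOfPartialInj (hg : Set.InjOn g {a | (g a).isSome}) :
    IsWbf (m + 2) (wbfOfPartialInj g) := by
  refine ⟨fun q => ?_, fun q hq => ?_, fun i j hij => ?_⟩
  · by_cases h : q.val < m
    · rw [wbfOfPartialInj_of_lt h]; exact val_wbfTarget_ne_zero _
    · rw [wbfOfPartialInj_of_le (by omega)]; simp
  · rw [wbfOfPartialInj_of_le (by omega)]; simp
  · rw [or_iff_not_imp_right, not_not]
    intro heq
    suffices (wbfOfPartialInj g i).val = m + 1 by rw [← heq]; omega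
    by_contra hi_ne
    have hi : i.val < m := by
      by_contra h; rw [wbfOfPartialInj_of_le (by omega)] at hi_ne; simp at hi_ne
    have hj : j.val < m := by
      by_contra h; rw [heq, wbfOfPartialInj_of_le (by omega)] at hi_ne; simp at hi_ne
    rw [wbfOfPartialInj_of_lt hi, val_wbfTarget_eq_iff] at hi_ne
    rw [wbfOfPartialInj_of_lt hi, wbfOfPartialInj_of_lt hj] at heq
    have hgi := Option.ne_none_iff_isSome.1 hi_ne
    have hgij := wbfTarget_injective heq
    exact hij (Fin.ext (Fin.mk.inj_iff.1 (hg hgi (by rwa [Set.mem_ofPred_eq, ← hgij]) hgij)))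

theorem wbfOfPartialInj_injective : Function.Injective (wbfOfPartialInj (m := m)) := by
  intro g g' h
  funext i
  have := congrFun h (i.castAdd 2)
  rwa [wbfOfPartialInj_of_lt i.2, wbfOfPartialInj_of_lt i.2, wbfTarget_injective.eq_iff] at this

theorem exists_wbfOfPartialInj_eq {t : Fin (m + 2) → Fin (m + 2)} (ht : IsWbf (m + 2) t) :
    ∃ g : Fin m → Option (Fin m), Set.InjOn g {a | (g a).isSome} ∧ wbfOfPartialInj g = t := by
  obtain ⟨htZero, htSink, htInj⟩ := ht
  choose g hg using fun i : Fin m => exists_wbfTarget_eq (htZero (i.castAdd 2))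
  refine ⟨g, fun i hi j hj hij => ?_, funext fun q => ?_⟩
  · have heq : t (i.castAdd 2) = t (j.castAdd 2) := by rw [← hg, ← hg, hij]
    have hi_ne : (t (i.castAdd 2)).val ≠ m + 1 := by
      rw [← hg, Ne, val_wbfTarget_eq_iff]; exact Option.ne_none_iff_isSome.2 hi
    by_contra hne
    rcases htInj _ _ ((Fin.castAdd_injective m 2).ne hne) with ⟨h, -⟩ | h
    · omega
    · exact h heq
  · by_cases hq : q.val < m
    · rw [wbfOfPartialInj_of_lt hq]; exact hg ⟨q, hq⟩
    · rw [wbfOfPartialInj_of_le (by omega)]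
      have := htSink q (by omega)
      ext; rw [Fin.val_last]; omega

theorem card_isWbf_eq_card_partialInj :
    Nat.card {t : Fin (m + 2) → Fin (m + 2) // IsWbf (m + 2) t} =
      Nat.card {g : Fin m → Option (Fin m) // Set.InjOn g {a | (g a).isSome}} := by
  refine (Nat.card_congr (Equiv.ofBijective (fun g => ⟨_, isWbf_wbfOfPartialInj g.2⟩)
    ⟨fun g g' h => Subtype.ext (wbfOfPartialInj_injective (congrArg Subtype.val h)), ?_⟩)).symm
  rintro ⟨t, ht⟩
  obtain ⟨g, hg, rfl⟩ := exists_wbfOfPartialInj_eq ht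
  exact ⟨⟨g, hg⟩, rfl⟩

end PartialInjEncoding

/-- For `n ≥ 3`, `W_bf(n)` is closed under composition and has cardinality
`Σ_{k=0}^{n-2} C(n-2,k)² · (n-2-k)!`. -/
theorem statement12 (n : ℕ) (hn : 3 ≤ n) :
    (∀ s t : Fin n → Fin n, IsWbf n s → IsWbf n t → IsWbf n (t ∘ s)) ∧
    Nat.card {t : Fin n → Fin n // IsWbf n t} =
      ∑ k ∈ Finset.range (n - 1), ((n - 2).choose k) ^ 2 * Nat.factorial (n - 2 - k) := by
  refine ⟨fun s t hs ht => hs.comp ht, ?_⟩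
  obtain ⟨m, rfl⟩ : ∃ m, n = m + 2 := ⟨n - 2, by omega⟩
  rw [card_isWbf_eq_card_partialInj, card_partialInj, Fintype.card_fin,
    sum_choose_mul_descFactorial]
  simp
end

section
/- Let Q = {1,…,n} with n ≥ 3 and let L be a regular language whose minimal DFA has state set Q, a unique accepting state n−1 with quotient {ε}, and empty state n. If every transformation t in the transition semigroup satisfies: 1 ∉ rng(t), (n−1)t = nt = n, and for all j ≥ 1, 1t^j = n−1 implies it^j = n for all 1 < i < n−1, then L is factor-free. -/
/-!
Since the quotient of the accepting state is `{ε}`, no accepted word is a proper prefix of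
another, which settles the factors `x` of `y = u x v` with `u` or `x` empty. Otherwise the
state `q` reached by `u ≠ ε` is not the initial state `1`, and `x` sends `q` to the empty
state: either `q ∈ {n-1, n}`, or `q` is an inner state and, as `1 t_x = n-1` because `x` is
accepted, the condition on `t_x` (with `j = 1`) gives `q t_x = n`. Hence `u x v` is rejected.
-/

/-- No word of `L` is a proper factor (contiguous subword) of another word of `L`. -/
def FactorFree {α : Type} (L : Language α) : Prop :=
  ∀ x ∈ L, ∀ y ∈ L, x <:+: y → x = y

namespace DFA

variable {α : Type} {σ : Type*} (M : DFA α σ)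

theorem eq_nil_of_mem_accepts_of_append_mem_accepts
    (hquot : ∀ q ∈ M.accept, ∀ w, M.evalFrom q w ∈ M.accept → w = [])
    {x v : List α} (hx : x ∈ M.accepts) (hxv : x ++ v ∈ M.accepts) : v = [] :=
  hquot _ hx v (by rwa [mem_accepts, eval, evalFrom_of_append] at hxv)

theorem factorFree_accepts
    (hquot : ∀ q ∈ M.accept, ∀ w, M.evalFrom q w ∈ M.accept → w = [])
    (hdead : ∀ u x : List α, u ≠ [] → x ≠ [] → x ∈ M.accepts →
      ∀ v, M.evalFrom (M.eval (u ++ x)) v ∉ M.accept) :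
    FactorFree M.accepts := by
  rintro x hx y hy ⟨u, v, rfl⟩
  rcases eq_or_ne x [] with rfl | hx0
  · exact (M.eq_nil_of_mem_accepts_of_append_mem_accepts hquot hx hy).symm
  rcases eq_or_ne u [] with rfl | hu
  · simp [M.eq_nil_of_mem_accepts_of_append_mem_accepts hquot hx hy]
  · exact absurd (by rwa [mem_accepts, eval, evalFrom_of_append] at hy) (hdead u x hu hx0 hx v)

end DFA

theorem statement15_general {α : Type} (n : ℕ) (M : DFA α (Fin n))
    (hstart : M.start.val = 0)
    (haccept : ∀ q : Fin n, q ∈ M.accept ↔ q.val = n - 2)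
    (hacceptQuot : ∀ q : Fin n, q.val = n - 2 →
      ∀ w : List α, M.evalFrom q w ∈ M.accept ↔ w = [])
    (hempty : ∀ q : Fin n, q.val = n - 1 → ∀ w : List α, M.evalFrom q w ∉ M.accept)
    (hts : ∀ w : List α, w ≠ [] →
      (∀ q : Fin n, (M.evalFrom q w).val ≠ 0) ∧
      (∀ q : Fin n, q.val = n - 2 ∨ q.val = n - 1 → (M.evalFrom q w).val = n - 1) ∧
      (∀ j : ℕ, 1 ≤ j → ∀ q : Fin n, q.val = 0 →
        ((fun p => M.evalFrom p w)^[j] q).val = n - 2 →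
        ∀ i : Fin n, i.val ≠ 0 → i.val ≠ n - 2 → i.val ≠ n - 1 →
          ((fun p => M.evalFrom p w)^[j] i).val = n - 1)) :
    FactorFree M.accepts := by
  refine M.factorFree_accepts (fun q hq w => (hacceptQuot q ((haccept q).1 hq) w).1) ?_
  intro u x hu hx0 hx v
  obtain ⟨-, hfinal, hkill⟩ := hts x hx0
  have hq : (M.eval u).val ≠ 0 := (hts u hu).1 M.start
  refine hempty _ ?_ v
  rw [DFA.eval, DFA.evalFrom_of_append]
  by_cases hfin : (M.eval u).val = n - 2 ∨ (M.eval u).val = n - 1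
  · exact hfinal _ hfin
  · obtain ⟨hq₁, hq₂⟩ := not_or.1 hfin
    exact hkill 1 le_rfl M.start hstart ((haccept _).1 hx) _ hq hq₁ hq₂

/-- Let `L` be the language of a minimal DFA with state set `Q = {1,…,n}` (encoded
as `Fin n`, state `i` ↦ index `i-1`), unique accepting state `n-1` whose quotient
is `{ε}`, and empty state `n`. If every transformation `t` of `Q` induced by a
nonempty word satisfies `1 ∉ rng t`, `(n-1) t = n t = n`, and for all `j ≥ 1`,
`1 t^j = n-1` implies `i t^j = n` for all `1 < i < n-1`, then `L` is factor-free. -/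
theorem statement15 {α : Type} (n : ℕ) (hn : 3 ≤ n) (M : DFA α (Fin n))
    (hstart : M.start.val = 0)
    (haccept : ∀ q : Fin n, q ∈ M.accept ↔ q.val = n - 2)
    (hacceptQuot : ∀ q : Fin n, q.val = n - 2 →
      ∀ w : List α, M.evalFrom q w ∈ M.accept ↔ w = [])
    (hempty : ∀ q : Fin n, q.val = n - 1 → ∀ w : List α, M.evalFrom q w ∉ M.accept)
    (hreach : ∀ q : Fin n, ∃ w : List α, M.eval w = q)
    (hdistinct : ∀ p q : Fin n,
      (∀ w : List α, M.evalFrom p w ∈ M.accept ↔ M.evalFrom q w ∈ M.accept) → p = q)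
    (hts : ∀ w : List α, w ≠ [] →
      (∀ q : Fin n, (M.evalFrom q w).val ≠ 0) ∧
      (∀ q : Fin n, q.val = n - 2 ∨ q.val = n - 1 → (M.evalFrom q w).val = n - 1) ∧
      (∀ j : ℕ, 1 ≤ j → ∀ q : Fin n, q.val = 0 →
        ((fun p => M.evalFrom p w)^[j] q).val = n - 2 →
        ∀ i : Fin n, i.val ≠ 0 → i.val ≠ n - 2 → i.val ≠ n - 1 →
          ((fun p => M.evalFrom p w)^[j] i).val = n - 1)) :
    FactorFree M.accepts :=
  statement15_general n M hstart haccept hacceptQuot hempty hts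
end

section
/- Let t be a transformation of the finite set Q = {1,…,n} in B_sf(n) (i.e., 1 ∉ rng(t), nt = n, and for all j ≥ 1 either 1t^j = n or 1t^j ≠ it^j for all 1 < i < n). Then for any i ∈ Q not appearing in the sequence 1, 1t, 1t², …, there are no indices j < j' with 1t^j ≠ n and 1t^j = it^{j'}. -/
/-- No long principal connections: if `t ∈ B_sf(n)` and `i` does not occur in the
sequence `1, 1t, 1t², …`, then there are no indices `j < j'` with `1 t^j ≠ n` and
`1 t^j = i t^{j'}`. -/
theorem statement17 (n : ℕ) (hn : 2 ≤ n) (t : Fin n → Fin n) (ht : IsBsf n t)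
    (i : Fin n) (hi : ∀ j : ℕ, ∀ q : Fin n, q.val = 0 → t^[j] q ≠ i) :
    ∀ j j' : ℕ, j < j' → ∀ q : Fin n, q.val = 0 →
      (t^[j] q).val ≠ n - 1 → t^[j] q ≠ t^[j'] i := by
  obtain ⟨h1, h2, h3⟩ := ht
  intro j j' hjj q hq hne heq
  rcases Nat.eq_zero_or_pos j with rfl | hj
  · obtain ⟨k, hk⟩ : ∃ k, j' = k + 1 := ⟨j' - 1, by omega⟩
    rw [hk, Function.iterate_succ_apply'] at heq
    simp only [Function.iterate_zero_apply] at heq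
    exact h1 (t^[k] i) (by rw [← heq]; exact hq)
  · set i' := t^[j' - j] i with hi'
    have hcomp : t^[j] i' = t^[j'] i := by
      rw [hi', ← Function.iterate_add_apply, Nat.add_sub_cancel' hjj.le]
    have hi'0 : i'.val ≠ 0 := by
      obtain ⟨k, hk⟩ : ∃ k, j' - j = k + 1 := ⟨j' - j - 1, by omega⟩
      rw [hi', hk, Function.iterate_succ_apply']
      exact h1 _
    have hi'n : i'.val ≠ n - 1 := by
      intro h
      have hfix : t^[j] i' = i' := Function.iterate_fixed (h2 _ h) j
      rw [hfix] at hcomp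
      rw [heq, ← hcomp] at hne
      exact hne h
    rcases h3 j hj q hq with h | h
    · exact hne h
    · exact h i' hi'0 hi'n (heq.trans hcomp.symm)
end

section
/- For every n ≥ 3 there exists a prefix-free regular language L with quotient complexity n such that the reverse language L^R has quotient complexity exactly 2^{n−2} + 1. -/
/-- The reverse of a language. -/
def reverseLang {α : Type} (L : Language α) : Language α := {w | w.reverse ∈ L}

/-!
The letters of the witness act as partial transformations of a finite set `Q` of states, together
with an end marker `#`. The language consists of the words `u#` in which `u` sends a fixed state
`q₀` back to `q₀`; its minimal DFA has the states of `Q`, one accepting state and one empty state.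
Since every partial transformation is available, the subset automaton of the reverse reaches all
`2^|Q|` sets of states after its first letter `#`, and any two of them are separated by a
one-letter word, while the initial state is the only one accepting `#`. Taking `|Q| = n - 2` and
relabelling the letters by `Fin k` gives the two quotient complexities `n` and `2^(n-2) + 1`.
-/

open Function

namespace DFA

variable {α β σ : Type*} (M : DFA α σ)

theorem evalFrom_eq_self_of_step_eq {s : σ} (h : ∀ a, M.step s a = s) (w : List α) :
    M.evalFrom s w = s := by
  induction w with
  | nil => rfl
  | cons a w ih => rw [evalFrom_cons, h, ih]

theorem acceptsFrom_comap (f : β → α) (s : σ) :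
    (M.comap f).acceptsFrom s = List.map f ⁻¹' M.acceptsFrom s := by
  ext w
  exact iff_of_eq (congrArg (· ∈ M.accept) (evalFrom_comap M f s w))

theorem eval_comap_surjective {f : β → α} (hf : Surjective f) (hM : Surjective M.eval) :
    Surjective (M.comap f).eval := by
  intro s
  obtain ⟨w, rfl⟩ := hM s
  obtain ⟨w', rfl⟩ := List.map_surjective_iff.mpr hf w
  exact ⟨w', eval_comap M f w'⟩

theorem acceptsFrom_comap_injective {f : β → α} (hf : Surjective f)
    (hM : Injective M.acceptsFrom) : Injective (M.comap f).acceptsFrom := by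
  intro s t h
  simp only [acceptsFrom_comap] at h
  exact hM (Set.preimage_injective.mpr (List.map_surjective_iff.mpr hf) h)

end DFA

section Languages

variable {α β : Type}

theorem PrefixFree.preimage_map {L : Language α} (hL : PrefixFree L) {f : β → α}
    (hf : Injective f) : PrefixFree (List.map f ⁻¹' L : Language β) :=
  fun _ hx _ hy hxy => List.map_injective_iff.mpr hf (hL _ hx _ hy (hxy.map f))

theorem reverseLang_preimage_map (L : Language α) (f : β → α) :
    reverseLang (List.map f ⁻¹' L : Language β) = List.map f ⁻¹' reverseLang L := by
  ext w
  show w.reverse.map f ∈ L ↔ (w.map f).reverse ∈ L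
  rw [List.map_reverse]

theorem quotientComplexity_accepts {σ : Type*} (M : DFA α σ) (hreach : Surjective M.eval)
    (hdist : Injective M.acceptsFrom) : quotientComplexity M.accepts = Nat.card σ := by
  have : leftQuotient M.accepts = M.acceptsFrom ∘ M.eval := Language.leftQuotient_accepts M
  rw [quotientComplexity, this, Set.range_comp, hreach.range_eq, Set.image_univ,
    Nat.card_range_of_injective hdist]

theorem quotientComplexity_comap_accepts {σ : Type*} (M : DFA α σ) {f : β → α}
    (hf : Surjective f) (hreach : Surjective M.eval) (hdist : Injective M.acceptsFrom) :
    quotientComplexity (M.comap f).accepts = Nat.card σ :=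
  quotientComplexity_accepts _ (M.eval_comap_surjective hf hreach)
    (M.acceptsFrom_comap_injective hf hdist)

theorem prefixFree_accepts {σ : Type*} (M : DFA α σ)
    (h : ∀ s ∈ M.accept, ∀ w ≠ [], M.evalFrom s w ∉ M.accept) : PrefixFree M.accepts := by
  rintro x hx _ hy ⟨w, rfl⟩
  by_contra hw
  rw [DFA.accepts, DFA.mem_acceptsFrom, DFA.evalFrom_of_append] at hy
  exact h _ hx w (by simpa using hw) hy

/-- Through `S`, the automaton `N` simulates the subset construction for the reverse of
`M.accepts`. -/
theorem accepts_eq_reverseLang_of_simulation {σ τ : Type*} (M : DFA α σ) (N : DFA α τ)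
    (S : τ → Set σ) (h_start : S N.start = M.accept)
    (h_step : ∀ x a, S (N.step x a) = {s | M.step s a ∈ S x})
    (h_accept : ∀ x, x ∈ N.accept ↔ M.start ∈ S x) : N.accepts = reverseLang M.accepts := by
  have evalFrom_reverse (w : List α) :
      ∀ x, S (N.evalFrom x w) = {s | M.evalFrom s w.reverse ∈ S x} := by
    induction w with
    | nil => intro x; rfl
    | cons a w ih =>
      intro x
      ext s
      simp [DFA.evalFrom_cons, ih, h_step, DFA.evalFrom_append_singleton]
  ext w
  rw [DFA.mem_accepts, h_accept, DFA.eval, evalFrom_reverse, h_start]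
  rfl

end Languages

namespace ReversalWitness

/-- `some f` acts by the partial transformation `f` (undefined means: go to the empty state);
`none` is the end marker `#`. -/
abbrev Letter (Q : Type) := Option (Q → Option Q)

variable {Q : Type} (q₀ : Q)

open scoped Classical in
/-- States: `some (some q)` for `q : Q`, the accepting state `some none`, the empty state
`none`. -/
noncomputable def dfa : DFA (Letter Q) (Option (Option Q)) where
  step
    | some (some q), some f => (f q).map some
    | some (some q), none => if q = q₀ then some none else none
    | _, _ => none
  start := some (some q₀)
  accept := {some none}

/-- After reading `#v`, the state `some T` records the set `T` of states `q` from which `v`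
reversed leads back to `q₀`. -/
def reverseDFA : DFA (Letter Q) (Option (Set Q)) where
  step
    | none, none => some {q₀}
    | some T, some f => some {q | ∃ q' ∈ T, f q = some q'}
    | _, _ => some ∅
  start := none
  accept := {x | ∃ T, x = some T ∧ q₀ ∈ T}

theorem dfa_prefixFree : PrefixFree (dfa q₀).accepts := by
  apply prefixFree_accepts
  rintro s rfl (_ | ⟨a, w⟩) hw
  · exact absurd rfl hw
  · rw [DFA.evalFrom_cons, DFA.evalFrom_eq_self_of_step_eq _ (fun _ => rfl)]
    rintro ⟨⟩

theorem dfa_eval_surjective : Surjective (dfa q₀).eval := by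
  rintro (_ | _ | q)
  · exact ⟨[none, none], by simp [DFA.eval, dfa]⟩
  · exact ⟨[none], by simp [DFA.eval, dfa]⟩
  · exact ⟨[some fun _ => some q], rfl⟩

theorem dfa_acceptsFrom_injective : Injective (dfa q₀).acceptsFrom := by
  classical
  have nil_mem (s) : [] ∈ (dfa q₀).acceptsFrom s ↔ s = some none := Iff.rfl
  let probe (q : Q) : List (Letter Q) := [some fun q' => if q' = q then some q₀ else none, none]
  have probe_mem (s q) : probe q ∈ (dfa q₀).acceptsFrom s ↔ s = some (some q) := by
    rcases s with _ | _ | q'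
    · simp [probe, DFA.mem_acceptsFrom, dfa]
    · simp [probe, DFA.mem_acceptsFrom, dfa]
    · by_cases hq : q' = q <;> simp [probe, DFA.mem_acceptsFrom, dfa, hq]
  have determined (s t) (h : (dfa q₀).acceptsFrom s = (dfa q₀).acceptsFrom t) (hs : s ≠ none) :
      s = t := by
    rcases s with _ | _ | q
    · exact absurd rfl hs
    · exact ((nil_mem t).mp (h ▸ (nil_mem _).mpr rfl)).symm
    · exact ((probe_mem t q).mp (h ▸ (probe_mem _ q).mpr rfl)).symm
  intro s t h
  by_cases hs : s = none
  · by_cases ht : t = none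
    · rw [hs, ht]
    · exact (determined t s h.symm ht).symm
  · exact determined s t h hs

theorem reverseDFA_accepts : (reverseDFA q₀).accepts = reverseLang (dfa q₀).accepts := by
  apply accepts_eq_reverseLang_of_simulation
    (S := fun x => x.elim {some none} fun T => some ∘ some '' T)
  · rfl
  · rintro (_ | T) (_ | f) <;> ext ((_ | _ | q)) <;> simp [dfa, reverseDFA]
  · rintro (_ | T) <;> simp [dfa, reverseDFA]

theorem reverseDFA_eval_surjective : Surjective (reverseDFA q₀).eval := by
  classical
  rintro (_ | T)
  · exact ⟨[], rfl⟩
  · refine ⟨[none, some fun q => if q ∈ T then some q₀ else none], ?_⟩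
    simp [DFA.eval, reverseDFA]

theorem reverseDFA_acceptsFrom_injective : Injective (reverseDFA q₀).acceptsFrom := by
  have marker_mem (x) : [none] ∈ (reverseDFA q₀).acceptsFrom x ↔ x = none := by
    rcases x with _ | T <;> simp [DFA.mem_acceptsFrom, reverseDFA]
  have const_mem (T q) :
      [some fun _ => some q] ∈ (reverseDFA q₀).acceptsFrom (some T) ↔ q ∈ T := by
    simp [DFA.mem_acceptsFrom, reverseDFA]
  rintro (_ | T) (_ | T') h
  · rfl
  · exact absurd ((marker_mem _).mp (h ▸ (marker_mem _).mpr rfl)) (Option.some_ne_none _)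
  · exact absurd ((marker_mem _).mp (h ▸ (marker_mem _).mpr rfl)) (Option.some_ne_none _)
  · congr 1
    ext q
    rw [← const_mem, h, const_mem]

end ReversalWitness

open ReversalWitness in
/-- For every `n ≥ 3` there exists a prefix-free regular language `L` with quotient
complexity `n` whose reverse has quotient complexity exactly `2^(n-2) + 1`. -/
theorem statement18 (n : ℕ) (hn : 3 ≤ n) :
    ∃ (k : ℕ) (L : Language (Fin k)), PrefixFree L ∧ quotientComplexity L = n ∧
      quotientComplexity (reverseLang L) = 2 ^ (n - 2) + 1 := by
  let q₀ : Fin (n - 2) := ⟨0, by omega⟩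
  let e := (Fintype.equivFin (Letter (Fin (n - 2)))).symm
  refine ⟨_, ((dfa q₀).comap e).accepts, ?_, ?_, ?_⟩
  · rw [DFA.accepts_comap]
    exact (dfa_prefixFree q₀).preimage_map e.injective
  · rw [quotientComplexity_comap_accepts _ e.surjective (dfa_eval_surjective q₀)
      (dfa_acceptsFrom_injective q₀)]
    simp only [Nat.card_eq_fintype_card, Fintype.card_option, Fintype.card_fin]
    omega
  · rw [DFA.accepts_comap, reverseLang_preimage_map, ← reverseDFA_accepts, ← DFA.accepts_comap,
      quotientComplexity_comap_accepts _ e.surjective (reverseDFA_eval_surjective q₀)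
        (reverseDFA_acceptsFrom_injective q₀)]
    simp only [Nat.card_eq_fintype_card, Fintype.card_option, Fintype.card_set, Fintype.card_fin]
end

section
/- Let Q = {1,…,n} with n ≥ 3, Q' = Q ∖ {n−1, n}, Q'' = Q ∖ {1, n}. The semigroup W_bf(n) = {t : Q → Q such that 1 ∉ rng(t), (n−1)t = nt = n, and for all distinct i,j either it = jt = n or it ≠ jt} is generated by its subset G = {t ∈ W_bf(n) : t restricted to Q' is a bijection from Q' onto Q''}. -/
open Function Set Equiv

section

variable {X : Type*} {x₀ y₀ z : X}

/-- The paper's `W_bf(n)` on an arbitrary state set: `x₀`, `y₀`, `z` play the roles of the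
states `1`, `n - 1`, `n`, so that `Q' = {y₀, z}ᶜ` and `Q'' = {x₀, z}ᶜ`. -/
structure IsWbfMap (x₀ y₀ z : X) (t : X → X) : Prop where
  ne_source : ∀ x, t x ≠ x₀
  map_y₀ : t y₀ = z
  map_z : t z = z
  eq_sink_of_eq : ∀ ⦃i j⦄, i ≠ j → t i = t j → t i = z

variable (x₀ y₀ z) in
def wbf : Subsemigroup (Function.End X) where
  carrier := {t | IsWbfMap x₀ y₀ z t}
  mul_mem' {s t} hs ht :=
    { ne_source := fun x => hs.ne_source (t x)
      map_y₀ := show s (t y₀) = z by rw [ht.map_y₀, hs.map_z]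
      map_z := show s (t z) = z by rw [ht.map_z, hs.map_z]
      eq_sink_of_eq := fun i j hij hst => by
        by_cases h : t i = t j
        · exact (congrArg s (ht.eq_sink_of_eq hij h)).trans hs.map_z
        · exact hs.eq_sink_of_eq h hst }

variable (x₀ y₀ z) in
def wbfGenerators : Set (Function.End X) :=
  {g | IsWbfMap x₀ y₀ z g ∧ BijOn g {y₀, z}ᶜ {x₀, z}ᶜ}

lemma ncard_compl_pair [Finite X] {a b : X} (h : a ≠ b) :
    ({a, b}ᶜ : Set X).ncard = Nat.card X - 2 := by
  rw [ncard_compl, ncard_pair h]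

lemma IsWbfMap.bijOn_of_ne_sink [Finite X] (hx₀ : x₀ ≠ z) (hy₀ : y₀ ≠ z) {t : X → X}
    (ht : IsWbfMap x₀ y₀ z t) (h : ∀ x ∈ ({y₀, z}ᶜ : Set X), t x ≠ z) :
    BijOn t {y₀, z}ᶜ {x₀, z}ᶜ := by
  have hinj : InjOn t {y₀, z}ᶜ := fun i hi j _ hij => by
    by_contra hne
    exact h i hi (ht.eq_sink_of_eq hne hij)
  have hmaps : MapsTo t {y₀, z}ᶜ {x₀, z}ᶜ := fun x hx => by
    simpa using ⟨ht.ne_source x, h x hx⟩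
  have himage : t '' {y₀, z}ᶜ = {x₀, z}ᶜ :=
    eq_of_subset_of_ncard_le hmaps.image_subset
      (by rw [hinj.ncard_image, ncard_compl_pair hx₀, ncard_compl_pair hy₀])
  exact himage ▸ hinj.bijOn_image

variable [DecidableEq X]

def collapse (y₀ z : X) (π : Perm X) : X → X :=
  fun x => if x = y₀ ∨ x = z then z else π x

lemma collapse_mem_wbfGenerators (hx₀ : x₀ ≠ z) {π : Perm X} (hπy : π y₀ = x₀)
    (hπz : π z = z) : collapse y₀ z π ∈ wbfGenerators x₀ y₀ z := by
  have hmaps : ∀ x, ¬(x = y₀ ∨ x = z) → π x ≠ x₀ ∧ π x ≠ z := by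
    rintro x hx
    rw [← hπy, ← hπz, π.injective.ne_iff, π.injective.ne_iff]
    exact not_or.mp hx
  have hbij : BijOn π {y₀, z}ᶜ {x₀, z}ᶜ := by
    have : π '' {y₀, z}ᶜ = {x₀, z}ᶜ := by
      rw [π.image_compl, image_pair, hπy, hπz]
    exact this ▸ π.injective.injOn.bijOn_image
  refine ⟨⟨fun x => ?_, by simp [collapse], by simp [collapse], fun i j hij hg => ?_⟩,
    hbij.congr fun x hx => ?_⟩
  · unfold collapse
    split_ifs with hx
    · exact hx₀.symm
    · exact (hmaps x hx).1
  · unfold collapse at hg ⊢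
    split_ifs at hg ⊢ with hi hj hj
    · rfl
    · exact absurd hg.symm (hmaps j hj).2
    · exact hg
    · exact absurd (π.injective hg) hij
  · simp only [mem_compl_iff, mem_insert_iff, mem_singleton_iff] at hx
    simp [collapse, hx]

lemma IsWbfMap.eq_comp_collapse {t : X → X} (ht : IsWbfMap x₀ y₀ z t) (hy₀ : y₀ ≠ z)
    {π : Perm X} (hπz : π z = z) (v : X) :
    t = (update t y₀ v ∘ π.symm) ∘ collapse y₀ z π := by
  funext x
  rw [comp_apply, comp_apply]
  unfold collapse
  split_ifs with hx
  · rw [π.symm_apply_eq.mpr hπz.symm, update_of_ne hy₀.symm, ht.map_z]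
    rcases hx with rfl | rfl
    exacts [ht.map_y₀, ht.map_z]
  · rw [π.symm_apply_apply, update_of_ne (not_or.mp hx).1]

lemma IsWbfMap.update_comp {t : X → X} (ht : IsWbfMap x₀ y₀ z t) (hy₀ : y₀ ≠ z)
    {v : X} (hv : v ∉ range t) (hvx₀ : v ≠ x₀) {π : Perm X} (hπz : π z = z) {q : X}
    (hπq : π q = y₀) (hqy₀ : q ≠ y₀) (htq : t q = z) :
    IsWbfMap x₀ y₀ z (update t y₀ v ∘ π.symm) := by
  have hvt : ∀ x, t x ≠ v := fun x h => hv ⟨x, h⟩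
  refine ⟨fun x => ?_, ?_, ?_, fun i j hij hu => ?_⟩
  · simp only [comp_apply, update_apply]
    split_ifs
    exacts [hvx₀, ht.ne_source _]
  · rw [comp_apply, π.symm_apply_eq.mpr hπq.symm, update_of_ne hqy₀, htq]
  · rw [comp_apply, π.symm_apply_eq.mpr hπz.symm, update_of_ne hy₀.symm, ht.map_z]
  · have hij' : π.symm i ≠ π.symm j := π.symm.injective.ne hij
    simp only [comp_apply, update_apply] at hu ⊢
    split_ifs at hu ⊢ with hi hj hj
    · exact absurd (hi.trans hj.symm) hij'
    · exact absurd hu.symm (hvt _)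
    · exact absurd hu (hvt _)
    · exact ht.eq_sink_of_eq hij' hu

lemma ncard_preimage_update_comp_lt [Finite X] {t : X → X} (hty₀ : t y₀ = z) {v : X}
    (hvz : v ≠ z) (π : Perm X) :
    ((update t y₀ v ∘ π.symm) ⁻¹' {z}).ncard < (t ⁻¹' {z}).ncard := by
  rw [preimage_comp, ncard_preimage_of_injective_subset_range π.symm.injective (by simp)]
  refine ncard_lt_ncard (LE.le.ssubset_of_mem_notMem (a := y₀) ?_ hty₀ (by simpa))
  intro x hx
  by_cases h : x = y₀
  · subst h; simp_all
  · simpa [update_of_ne h] using hx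

lemma IsWbfMap.exists_notMem_range [Finite X] (hy₀ : y₀ ≠ z) {t : X → X}
    (ht : IsWbfMap x₀ y₀ z t) {q : X} (hq : q ∈ ({y₀, z}ᶜ : Set X)) (htq : t q = z) :
    ∃ v, v ∉ range t ∧ v ≠ x₀ := by
  have hrange : range t = t '' {y₀, z}ᶜ := by
    refine Subset.antisymm ?_ (image_subset_range _ _)
    rintro _ ⟨x, rfl⟩
    by_cases hx : x ∈ ({y₀, z}ᶜ : Set X)
    · exact mem_image_of_mem t hx
    · refine ⟨q, hq, htq.trans ?_⟩
      rcases (by simpa [or_iff_not_imp_left] using hx : x = y₀ ∨ x = z) with rfl | rfl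
      exacts [ht.map_y₀.symm, ht.map_z.symm]
  have hcard : (range t).ncard ≤ Nat.card X - 2 :=
    hrange ▸ ncard_compl_pair hy₀ ▸ ncard_image_le
  have htwo : 2 ≤ Nat.card X := ncard_pair hy₀ ▸ ncard_le_card _
  by_contra! h
  have : Nat.card X ≤ (range t).ncard + 1 := by
    rw [← ncard_univ]
    refine (ncard_le_ncard fun v _ => ?_).trans (ncard_insert_le x₀ _)
    by_cases hv : v ∈ range t
    exacts [mem_insert_of_mem _ hv, h v hv ▸ mem_insert _ _]
  omega

theorem IsWbfMap.mem_closure_wbfGenerators [Finite X] (hx₀y₀ : x₀ ≠ y₀) (hx₀ : x₀ ≠ z)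
    (hy₀ : y₀ ≠ z) {t : Function.End X} (ht : IsWbfMap x₀ y₀ z t) :
    t ∈ Subsemigroup.closure (wbfGenerators x₀ y₀ z) := by
  by_cases h : ∀ x ∈ ({y₀, z}ᶜ : Set X), t x ≠ z
  · exact Subsemigroup.subset_closure ⟨ht, ht.bijOn_of_ne_sink hx₀ hy₀ h⟩
  push Not at h
  obtain ⟨q, hq, htq⟩ := h
  obtain ⟨v, hv, hvx₀⟩ := ht.exists_notMem_range hy₀ hq htq
  have hqy₀ : q ≠ y₀ := fun h => hq (by simp [h])
  have hqz : q ≠ z := fun h => hq (by simp [h])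
  -- `π q = y₀` makes the left factor `update t y₀ v ∘ π⁻¹` send `y₀` to the sink.
  set π : Perm X := Equiv.swap x₀ y₀ * Equiv.swap q x₀
  have hπy : π y₀ = x₀ := by simp [π, swap_apply_of_ne_of_ne hqy₀.symm hx₀y₀.symm]
  have hπz : π z = z := by
    simp [π, swap_apply_of_ne_of_ne hqz.symm hx₀.symm, swap_apply_of_ne_of_ne hx₀.symm hy₀.symm]
  have hπq : π q = y₀ := by simp [π]
  have ha := ht.update_comp hy₀ hv hvx₀ hπz hπq hqy₀ htq
  rw [ht.eq_comp_collapse hy₀ hπz v]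
  exact Subsemigroup.mul_mem _ (mem_closure_wbfGenerators hx₀y₀ hx₀ hy₀ ha)
    (Subsemigroup.subset_closure (collapse_mem_wbfGenerators hx₀ hπy hπz))
termination_by (t ⁻¹' {z}).ncard
decreasing_by
  exact ncard_preimage_update_comp_lt ht.map_y₀ (fun h => hv ⟨q, htq.trans h.symm⟩) π

theorem closure_wbfGenerators [Finite X] (hx₀y₀ : x₀ ≠ y₀) (hx₀ : x₀ ≠ z) (hy₀ : y₀ ≠ z) :
    Subsemigroup.closure (wbfGenerators x₀ y₀ z) = wbf x₀ y₀ z :=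
  le_antisymm (Subsemigroup.closure_le.mpr fun _ hg => hg.1)
    fun _ ht => ht.mem_closure_wbfGenerators hx₀y₀ hx₀ hy₀

end

lemma isWbf_iff_isWbfMap {n : ℕ} (hn : 3 ≤ n) (t : Function.End (Fin n)) :
    IsWbf n t ↔ IsWbfMap ⟨0, by omega⟩ ⟨n - 2, by omega⟩ ⟨n - 1, by omega⟩ t := by
  constructor
  · rintro ⟨h0, hsink, hinj⟩
    refine ⟨fun x h => h0 x (congrArg Fin.val h), Fin.ext (hsink _ (.inl rfl)),
      Fin.ext (hsink _ (.inr rfl)), fun i j hij h => ?_⟩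
    rcases hinj i j hij with h' | h'
    exacts [Fin.ext h'.1, absurd h h']
  · rintro ⟨h0, hy, hz, hinj⟩
    refine ⟨fun q h => h0 q (Fin.ext h), fun q hq => ?_, fun i j hij => ?_⟩
    · rcases hq with hq | hq
      · rw [show q = ⟨n - 2, by omega⟩ from Fin.ext hq, hy]
      · rw [show q = ⟨n - 1, by omega⟩ from Fin.ext hq, hz]
    · by_cases h : t i = t j
      · exact .inl ⟨congrArg Fin.val (hinj hij h), congrArg Fin.val (h ▸ hinj hij h)⟩
      · exact .inr h

/-- For `n ≥ 3`, the semigroup `W_bf(n)` (inside `Function.End (Fin n)`) is generated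
by its subset of elements restricting to a bijection from `Q' = Q ∖ {n-1, n}` onto
`Q'' = Q ∖ {1, n}`. -/
theorem statement19 (n : ℕ) (hn : 3 ≤ n) :
    ∀ t : Function.End (Fin n),
      t ∈ Subsemigroup.closure
        {g : Function.End (Fin n) |
          IsWbf n g ∧
          Set.BijOn g {q : Fin n | q.val ≠ n - 2 ∧ q.val ≠ n - 1}
            {q : Fin n | q.val ≠ 0 ∧ q.val ≠ n - 1}} ↔
      IsWbf n t := by
  intro t
  have hQ' : {q : Fin n | q.val ≠ n - 2 ∧ q.val ≠ n - 1} =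
      {⟨n - 2, by omega⟩, ⟨n - 1, by omega⟩}ᶜ := by
    ext q; simp [Fin.ext_iff]
  have hQ'' : {q : Fin n | q.val ≠ 0 ∧ q.val ≠ n - 1} =
      {⟨0, by omega⟩, ⟨n - 1, by omega⟩}ᶜ := by
    ext q; simp [Fin.ext_iff]
  have hgens : {g : Function.End (Fin n) | IsWbf n g ∧
      Set.BijOn g {q : Fin n | q.val ≠ n - 2 ∧ q.val ≠ n - 1}
        {q : Fin n | q.val ≠ 0 ∧ q.val ≠ n - 1}} =
      wbfGenerators ⟨0, by omega⟩ ⟨n - 2, by omega⟩ ⟨n - 1, by omega⟩ := by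
    ext g
    exact and_congr (isWbf_iff_isWbfMap hn g) (by rw [hQ', hQ''])
  rw [hgens, closure_wbfGenerators (by simp [Fin.ext_iff]; omega)
    (by simp [Fin.ext_iff]; omega) (by simp [Fin.ext_iff]; omega), isWbf_iff_isWbfMap hn]
  rfl
end
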